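/- arXiv:2310.06192 — 8 statements merged into one kernel-verified Lean document; each statement's English description precedes it below -/
import Mathlib

section
/- (Stacking Partition Lemma, distance-based form.) Let G be a finite connected simple graph, C a configuration on G, and r a vertex with C(r) ≥ 1. Define the configuration C − r by (C − r)(r) = 0 and (C − r)(v) = C(v) for v ≠ r. Then G is (C,r)-stackable if and only if either C − r is identically zero, or there exist k ≥ 1, configurations D_1, …, D_k and vertices s_1, …, s_k of G such that: (i) the D_i have pairwise disjoint supports (for every vertex w and every i ≠ j, D_i(w) = 0 or D_j(w) = 0); (ii) each D_i is nonzero; (iii) Σ_{i=1}^k D_i = C − r; (iv) for each i, G is (D_i, s_i)-stackable; and (v) for each i, dist_G(s_i, r) = |D_i|. -/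
/-- A cup-stacking move in graph `G`: all cups from `u` are moved to `v`, where
`u ≠ v`, both have at least one cup, and `dist G u v = C u`. -/
def CupMove {V : Type*} [DecidableEq V] (G : SimpleGraph V) (C C' : V → ℕ) : Prop :=
  ∃ u v : V, u ≠ v ∧ 1 ≤ C u ∧ 1 ≤ C v ∧ G.dist u v = C u ∧
    ∀ w, C' w = if w = u then 0 else if w = v then C u + C v else C w

/-- `G` is `(C, r)`-stackable: some finite sequence of cup-stacking moves starting
from `C` reaches the configuration with all `|C|` cups on `r` and none elsewhere. -/
def IsStackableConf {V : Type*} [Fintype V] [DecidableEq V]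
    (G : SimpleGraph V) (C : V → ℕ) (r : V) : Prop :=
  Relation.ReflTransGen (CupMove G) C (fun w => if w = r then ∑ v, C v else 0)

/-- `G` is `r`-stackable: `(𝟏, r)`-stackable where `𝟏` has one cup on each vertex. -/
def IsStackableAt {V : Type*} [Fintype V] [DecidableEq V]
    (G : SimpleGraph V) (r : V) : Prop :=
  IsStackableConf G (fun _ => 1) r

/-- `G` is stackable: `r`-stackable for every vertex `r`. -/
def IsStackable {V : Type*} [Fintype V] [DecidableEq V] (G : SimpleGraph V) : Prop :=
  ∀ r : V, IsStackableAt G r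

/-!
Read a stacking of `C` onto `r` from its first move `u → v`. The move cannot start at `r`, since
an emptied vertex stays empty. If `v = r`, the pile moved from `u` is a new part, already stacked
at `u`, at distance `C u` from `r`. Otherwise the move merged the pile at `u` into the part of the
next configuration's partition that contains `v`, and undoing the merge inside that part gives a
partition of `C`. Conversely, parts with disjoint supports, all missing `r`, can be stacked onto
their sites one after another without interfering, and each resulting pile then jumps onto `r`.
-/

open Finset Function

section

variable {V : Type*} [DecidableEq V] {G : SimpleGraph V}

abbrev CupMoves (G : SimpleGraph V) : (V → ℕ) → (V → ℕ) → Prop :=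
  Relation.ReflTransGen (CupMove G)

namespace CupMove

variable {C C' : V → ℕ}

theorem apply_eq_zero (h : CupMove G C C') {w : V} (hw : C w = 0) : C' w = 0 := by
  obtain ⟨u, v, -, hu, hv, -, hC'⟩ := h
  rw [hC' w]
  split_ifs <;> subst_vars <;> omega

theorem sum_eq [Fintype V] (h : CupMove G C C') : ∑ w, C' w = ∑ w, C w := by
  obtain ⟨u, v, huv, -, -, -, hC'⟩ := h
  have key : C' + Pi.single u (C u) = C + Pi.single v (C u) := by
    ext w
    simp only [Pi.add_apply, Pi.single_apply, hC' w]
    split_ifs <;> simp_all [add_comm]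
  simpa [sum_add_distrib] using congrArg (fun f => ∑ w, f w) key

theorem add {B : V → ℕ} (h : CupMove G C C') (hB : ∀ w, C w = 0 ∨ B w = 0) :
    CupMove G (C + B) (C' + B) := by
  obtain ⟨u, v, huv, hu, hv, hdist, hC'⟩ := h
  have hBu : B u = 0 := (hB u).resolve_left (by omega)
  have hBv : B v = 0 := (hB v).resolve_left (by omega)
  refine ⟨u, v, huv, ?_, ?_, ?_, fun w => ?_⟩ <;> simp only [Pi.add_apply, hBu, hBv, add_zero]
  · exact hu
  · exact hv
  · exact hdist
  · rw [hC' w]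
    split_ifs with hwu hwv <;> simp_all

end CupMove

namespace CupMoves

variable {C C' : V → ℕ}

theorem apply_eq_zero (h : CupMoves G C C') {w : V} (hw : C w = 0) : C' w = 0 := by
  induction h with
  | refl => exact hw
  | tail _ hmove ih => exact hmove.apply_eq_zero ih

theorem add {B : V → ℕ} (h : CupMoves G C C') (hB : ∀ w, C w = 0 ∨ B w = 0) :
    CupMoves G (C + B) (C' + B) := by
  induction h with
  | refl => exact .refl
  | tail hpath hmove ih => exact ih.tail (hmove.add fun w => (hB w).imp_left (apply_eq_zero hpath))

end CupMoves

theorem cupMove_single_add_single {s r : V} {n m : ℕ} (hsr : s ≠ r) (hn : n ≠ 0) (hm : m ≠ 0)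
    (hdist : G.dist s r = n) :
    CupMove G (Pi.single s n + Pi.single r m) (Pi.single r (n + m)) := by
  refine ⟨s, r, hsr, ?_, ?_, ?_, fun w => ?_⟩ <;> simp only [Pi.add_apply, Pi.single_apply]
  · simpa [hsr] using Nat.one_le_iff_ne_zero.2 hn
  · simpa [hsr.symm] using Nat.one_le_iff_ne_zero.2 hm
  · simpa [hsr] using hdist
  · split_ifs <;> simp_all

theorem cupMove_update_update {X : V → ℕ} {u v : V} {a b : ℕ} (huv : u ≠ v) (ha : a ≠ 0)
    (hb : b ≠ 0) (hdist : G.dist u v = a) (hu : X u = 0) (hv : X v = a + b) :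
    CupMove G (update (update X u a) v b) X := by
  refine ⟨u, v, huv, ?_, ?_, ?_, fun w => ?_⟩ <;>
    simp only [update_self, update_of_ne huv]
  · omega
  · omega
  · exact hdist
  · by_cases hwu : w = u
    · simp [hwu, hu]
    · by_cases hwv : w = v
      · simp [hwv, hv, huv.symm]
      · simp [hwu, hwv]

variable [Fintype V]

theorem isStackableConf_iff {C : V → ℕ} {r : V} :
    IsStackableConf G C r ↔ CupMoves G C (Pi.single r (∑ w, C w)) := by
  rw [IsStackableConf]
  congr! 2 with w
  simp [Pi.single_apply]

theorem isStackableConf_single (r : V) (n : ℕ) : IsStackableConf G (Pi.single r n) r := by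
  rw [isStackableConf_iff, sum_pi_single']
  simpa using .refl

theorem IsStackableConf.add {C D : V → ℕ} {r s : V} (hC : IsStackableConf G C r)
    (hD : IsStackableConf G D s) (hdisj : ∀ w, C w = 0 ∨ D w = 0) (hCr : C r ≠ 0) (hD0 : D ≠ 0)
    (hdist : G.dist s r = ∑ w, D w) : IsStackableConf G (C + D) r := by
  rw [isStackableConf_iff] at hC hD ⊢
  have hn : ∑ w, D w ≠ 0 := by
    simpa [sum_eq_zero_iff, funext_iff] using hD0
  have hm : ∑ w, C w ≠ 0 := fun h => hCr (sum_eq_zero_iff.1 h r (mem_univ r))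
  have hsr : s ≠ r := by
    rintro rfl
    exact hn (by simpa using hdist.symm)
  have hCs : C s = 0 := (hdisj s).resolve_right (mt hD.apply_eq_zero (by simpa using hn))
  have hstack : CupMoves G (C + D) (Pi.single s (∑ w, D w) + Pi.single r (∑ w, C w)) := by
    have hsC : ∀ x, C x = 0 ∨ (Pi.single s (∑ w, D w) : V → ℕ) x = 0 := fun x => by
      by_cases hxs : x = s
      · exact .inl (hxs ▸ hCs)
      · exact .inr (Pi.single_eq_of_ne hxs _)
    have hmoveC := hC.add hsC
    rw [add_comm C, add_comm (Pi.single r _)] at hmoveC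
    rw [add_comm C]
    exact (hD.add fun w => (hdisj w).symm).trans hmoveC
  have hsum : ∑ w, (C + D) w = ∑ w, D w + ∑ w, C w := by
    rw [add_comm, ← sum_add_distrib]
    rfl
  rw [hsum]
  exact hstack.tail (cupMove_single_add_single hsr hn hm hdist)

/-- `C - r` is `update C r 0`; an empty index type covers the case `C - r = 0`. -/
structure IsStackingPartition {ι : Type*} [Fintype ι] (G : SimpleGraph V)
    (C : V → ℕ) (r : V) (D : ι → V → ℕ) (s : ι → V) : Prop where
  disjoint : Pairwise fun i j => ∀ w, D i w = 0 ∨ D j w = 0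
  ne_zero : ∀ i, D i ≠ 0
  sum_eq : ∑ i, D i = update C r 0
  stackable : ∀ i, IsStackableConf G (D i) (s i)
  dist_eq : ∀ i, G.dist (s i) r = ∑ w, D i w

section Partition

variable {ι : Type*} [Fintype ι] {C : V → ℕ} {r : V} {D : ι → V → ℕ} {s : ι → V}

theorem isStackingPartition_iff_of_isEmpty [IsEmpty ι] :
    IsStackingPartition G C r D s ↔ ∀ w ≠ r, C w = 0 := by
  constructor
  · intro hP w hw
    simpa [hw, eq_comm] using congrFun hP.sum_eq w
  · intro hC
    refine ⟨fun i => isEmptyElim i, isEmptyElim, ?_, isEmptyElim, isEmptyElim⟩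
    ext w
    by_cases hw : w = r <;> simp [hw, hC]

namespace IsStackingPartition

theorem apply_le (hP : IsStackingPartition G C r D s) (i : ι) (w : V) :
    D i w ≤ update C r 0 w := by
  rw [← hP.sum_eq, Finset.sum_apply]
  exact single_le_sum (f := fun j => D j w) (fun _ _ => Nat.zero_le _) (mem_univ i)

theorem isStackableConf (hP : IsStackingPartition G C r D s) (hr : C r ≠ 0) :
    IsStackableConf G C r := by
  classical
  have hC : C = Pi.single r (C r) + ∑ i, D i := by
    ext w
    by_cases hw : w = r
    · subst hw
      simp [hP.sum_eq]
    · simp [hP.sum_eq, hw]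
  suffices ∀ S : Finset ι, IsStackableConf G (Pi.single r (C r) + ∑ i ∈ S, D i) r by
    rw [hC]
    exact this univ
  intro S
  induction S using Finset.induction_on with
  | empty => simpa using isStackableConf_single r (C r)
  | insert j S hj ih =>
    rw [sum_insert hj, add_comm (D j), ← add_assoc]
    refine ih.add (hP.stackable j) (fun w => ?_)
      (by rw [Pi.add_apply, Pi.single_eq_same]; omega) (hP.ne_zero j) (hP.dist_eq j)
    by_cases hw : D j w = 0
    · exact .inr hw
    have hwr : w ≠ r := by
      rintro rfl
      exact hw (by simpa using hP.apply_le j w)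
    refine .inl ?_
    simp only [Pi.add_apply, Finset.sum_apply, Pi.single_eq_of_ne hwr, zero_add]
    exact sum_eq_zero fun i hi =>
      (hP.disjoint (ne_of_mem_of_not_mem hi hj) w).resolve_right hw

theorem cons {k : ℕ} {C' E : V → ℕ} {t : V} {D : Fin k → V → ℕ} {s : Fin k → V}
    (hP : IsStackingPartition G C' r D s) (hE : IsStackableConf G E t) (hE0 : E ≠ 0)
    (hdist : G.dist t r = ∑ w, E w) (hdisj : ∀ i w, E w = 0 ∨ D i w = 0)
    (hC : update C r 0 = E + update C' r 0) :
    IsStackingPartition G C r (Fin.cons E D : Fin (k + 1) → V → ℕ) (Fin.cons t s) where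
  disjoint i j hij w := by
    induction i using Fin.cases <;> induction j using Fin.cases
    · exact absurd rfl hij
    · exact hdisj _ w
    · exact (hdisj _ w).symm
    · exact hP.disjoint (fun h => hij (congrArg Fin.succ h)) w
  ne_zero := Fin.cases hE0 hP.ne_zero
  sum_eq := by rw [Fin.sum_univ_succ, Fin.cons_zero]; simp only [Fin.cons_succ, hP.sum_eq, hC]
  stackable := Fin.cases hE hP.stackable
  dist_eq := Fin.cases hdist hP.dist_eq

theorem update_of_cupMove [DecidableEq ι] {C' E : V → ℕ} (hP : IsStackingPartition G C' r D s)
    (i : ι) (hE : CupMove G E (D i)) (hdisj : ∀ j ≠ i, ∀ w, E w = 0 ∨ D j w = 0)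
    (hC : update C r 0 + D i = update C' r 0 + E) :
    IsStackingPartition G C r (update D i E) s := by
  have hsum : ∑ w, D i w = ∑ w, E w := hE.sum_eq
  refine ⟨fun j l hjl w => ?_, fun j => ?_, ?_, fun j => ?_, fun j => ?_⟩
  · simp only [update_apply]
    split_ifs with hj hl hl
    · exact absurd (hj.trans hl.symm) hjl
    · exact hdisj l hl w
    · exact (hdisj j hj w).symm
    · exact hP.disjoint hjl w
  · rcases eq_or_ne j i with rfl | hj
    · rw [update_self]
      exact fun hE0 => hP.ne_zero j (funext fun w => hE.apply_eq_zero (congrFun hE0 w))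
    · simpa [hj] using hP.ne_zero j
  · refine add_right_cancel (b := D i) ?_
    rw [sum_update_of_mem (mem_univ i), hC, ← hP.sum_eq,
      sum_eq_add_sum_sdiff_singleton_of_mem (mem_univ i)]
    abel
  · rcases eq_or_ne j i with rfl | hj
    · rw [update_self, isStackableConf_iff, ← hsum]
      exact .head hE (isStackableConf_iff.1 (hP.stackable j))
    · simpa [hj] using hP.stackable j
  · rcases eq_or_ne j i with rfl | hj
    · rw [update_self, ← hsum]
      exact hP.dist_eq j
    · simpa [hj] using hP.dist_eq j

end IsStackingPartition

end Partition

theorem CupMove.exists_isStackingPartition {k : ℕ} {C C' : V → ℕ} {r : V}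
    {D : Fin k → V → ℕ} {s : Fin k → V} (h : CupMove G C C') (hr : C' r ≠ 0)
    (hP : IsStackingPartition G C' r D s) :
    ∃ (k' : ℕ) (D' : Fin k' → V → ℕ) (s' : Fin k' → V), IsStackingPartition G C r D' s' := by
  obtain ⟨u, v, huv, hu, hv, hdist, hC'⟩ := h
  have hur : u ≠ r := by rintro rfl; simp [hC'] at hr
  have hDu : ∀ i, D i u = 0 := fun i => by simpa [hur, hC'] using hP.apply_le i u
  rcases eq_or_ne v r with rfl | hvr
  · refine ⟨k + 1, _, _, hP.cons (isStackableConf_single u (C u)) ?_ ?_ (fun i w => ?_) ?_⟩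
    · simpa using Nat.one_le_iff_ne_zero.1 hu
    · simpa using hdist
    · by_cases hwu : w = u
      · exact .inr (hwu ▸ hDu i)
      · exact .inl (Pi.single_eq_of_ne hwu _)
    · ext w
      simp only [update_apply, Pi.add_apply, Pi.single_apply, hC']
      split_ifs <;> simp_all
  · -- the part of `C'` containing `v` absorbed the pile from `u`: split it off again
    obtain ⟨i, hi⟩ : ∃ i, D i v ≠ 0 := by
      have : ∑ i, D i v ≠ 0 := by
        rw [← Finset.sum_apply, hP.sum_eq]
        simp [hvr, hC', huv.symm]
        omega
      simpa using exists_ne_zero_of_sum_ne_zero this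
    have hDv : ∀ j ≠ i, D j v = 0 := fun j hj => (hP.disjoint hj v).resolve_right hi
    have hDiv : D i v = C u + C v := by
      have := congrFun hP.sum_eq v
      rw [Finset.sum_apply, sum_eq_single i (fun j _ hj => hDv j hj) (by simp)] at this
      simpa [hvr, hC', huv.symm] using this
    refine ⟨k, _, s, hP.update_of_cupMove i
      (cupMove_update_update huv (by omega) (by omega) hdist (hDu i) hDiv) (fun j hj w => ?_) ?_⟩
    · by_cases hwv : w = v
      · exact .inr (hwv ▸ hDv j hj)
      by_cases hwu : w = u
      · exact .inr (hwu ▸ hDu j)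
      simpa [hwu, hwv] using hP.disjoint hj.symm w
    · ext w
      simp only [update_apply, Pi.add_apply, hC']
      split_ifs <;> subst_vars <;> simp_all
      omega

theorem CupMoves.exists_isStackingPartition {C T : V → ℕ} {r : V} (h : CupMoves G C T)
    (hT : ∀ w ≠ r, T w = 0) (hTr : T r ≠ 0) :
    ∃ (k : ℕ) (D : Fin k → V → ℕ) (s : Fin k → V), IsStackingPartition G C r D s := by
  induction h using Relation.ReflTransGen.head_induction_on with
  | refl => exact ⟨0, finZeroElim, finZeroElim, isStackingPartition_iff_of_isEmpty.2 hT⟩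
  | head hmove hrest ih =>
    obtain ⟨k, D, s, hP⟩ := ih
    exact hmove.exists_isStackingPartition (mt (CupMoves.apply_eq_zero hrest) hTr) hP

theorem isStackableConf_iff_exists_isStackingPartition {C : V → ℕ} {r : V} (hr : C r ≠ 0) :
    IsStackableConf G C r ↔
      ∃ (k : ℕ) (D : Fin k → V → ℕ) (s : Fin k → V), IsStackingPartition G C r D s := by
  refine ⟨fun h => ?_, fun ⟨k, D, s, hP⟩ => hP.isStackableConf hr⟩
  refine (isStackableConf_iff.1 h).exists_isStackingPartition
    (fun w hw => Pi.single_eq_of_ne hw _) ?_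
  simpa using fun h => hr (sum_eq_zero_iff.1 h r (mem_univ r))

end

theorem stacking_partition_lemma_general {V : Type*} [Fintype V] [DecidableEq V]
    (G : SimpleGraph V) (C : V → ℕ) (r : V) (hr : 1 ≤ C r) :
    IsStackableConf G C r ↔
      ((∀ v : V, v ≠ r → C v = 0) ∨
        ∃ k : ℕ, 1 ≤ k ∧ ∃ (D : Fin k → V → ℕ) (s : Fin k → V),
          (∀ w : V, ∀ i j : Fin k, i ≠ j → D i w = 0 ∨ D j w = 0) ∧
          (∀ i : Fin k, ∃ w : V, D i w ≠ 0) ∧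
          (∀ w : V, ∑ i, D i w = if w = r then 0 else C w) ∧
          (∀ i : Fin k, IsStackableConf G (D i) (s i)) ∧
          (∀ i : Fin k, G.dist (s i) r = ∑ w, D i w)) := by
  have hsum_iff {k : ℕ} (D : Fin k → V → ℕ) :
      ∑ i, D i = update C r 0 ↔ ∀ w, ∑ i, D i w = if w = r then 0 else C w := by
    simp only [funext_iff, Finset.sum_apply, update_apply]
  rw [isStackableConf_iff_exists_isStackingPartition (by omega)]
  constructor
  · rintro ⟨_ | k, D, s, hP⟩
    · exact .inl (isStackingPartition_iff_of_isEmpty.1 hP)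
    · exact .inr ⟨k + 1, by omega, D, s, fun w i j hij => hP.disjoint hij w,
        fun i => ne_iff.1 (hP.ne_zero i), (hsum_iff D).1 hP.sum_eq, hP.stackable, hP.dist_eq⟩
  · rintro (hC | ⟨k, -, D, s, hdisj, hne, hD, hst, hdist⟩)
    · exact ⟨0, finZeroElim, finZeroElim, isStackingPartition_iff_of_isEmpty.2 hC⟩
    · exact ⟨k, D, s, fun i j hij w => hdisj w i j hij, fun i => ne_iff.2 (hne i),
        (hsum_iff D).2 hD, hst, hdist⟩

theorem stacking_partition_lemma {V : Type*} [Fintype V] [DecidableEq V]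
    (G : SimpleGraph V) (hG : G.Connected) (C : V → ℕ) (r : V) (hr : 1 ≤ C r) :
    IsStackableConf G C r ↔
      ((∀ v : V, v ≠ r → C v = 0) ∨
        ∃ k : ℕ, 1 ≤ k ∧ ∃ (D : Fin k → V → ℕ) (s : Fin k → V),
          (∀ w : V, ∀ i j : Fin k, i ≠ j → D i w = 0 ∨ D j w = 0) ∧
          (∀ i : Fin k, ∃ w : V, D i w ≠ 0) ∧
          (∀ w : V, ∑ i, D i w = if w = r then 0 else C w) ∧
          (∀ i : Fin k, IsStackableConf G (D i) (s i)) ∧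
          (∀ i : Fin k, G.dist (s i) r = ∑ w, D i w)) :=
  stacking_partition_lemma_general G C r hr
end

section
/- For every n ≥ 1, the path P_n on n vertices is stackable. -/
/-!
On a path, a block of single cups on `a, …, b` can be gathered onto any of its vertices `t`:
by induction, gather `a, …, t - 1` onto `a` and `t + 1, …, b` onto `b`; each of these two piles
then sits at distance exactly its own height from `t`, so it can be moved onto `t` in one move.
Taking the whole path as the block gives stackability at every vertex.
-/

open SimpleGraph Relation

theorem CupMove.of_dist_eq {V : Type*} [DecidableEq V] {G : SimpleGraph V} {C : V → ℕ}
    {u v : V} (hu : 1 ≤ C u) (hv : 1 ≤ C v) (huv : G.dist u v = C u) :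
    CupMove G C (fun w => if w = u then 0 else if w = v then C u + C v else C w) := by
  refine ⟨u, v, ?_, hu, hv, huv, fun _ => rfl⟩
  rintro rfl
  rw [SimpleGraph.dist_self] at huv
  omega

namespace SimpleGraph

variable {n : ℕ}

theorem pathGraph_dist_le_of_add_eq {u v : Fin n} {k : ℕ} (h : u.val + k = v.val) :
    (pathGraph n).dist u v ≤ k := by
  induction k generalizing v with
  | zero => rw [Fin.ext (by omega : u.val = v.val), dist_self]
  | succ k ih =>
    let w : Fin n := ⟨u + k, by omega⟩
    have hwv : (pathGraph n).Adj w v := pathGraph_adj.mpr (.inl (show u.val + k + 1 = v.val by omega))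
    calc (pathGraph n).dist u v ≤ (pathGraph n).dist u w + (pathGraph n).dist w v :=
          hwv.reachable.dist_triangle_right u
      _ ≤ k + 1 := by
          rw [dist_eq_one_iff_adj.mpr hwv]
          exact Nat.add_le_add_right (ih rfl) 1

theorem pathGraph_natDist_le_length {u v : Fin n} (p : (pathGraph n).Walk u v) :
    Nat.dist u v ≤ p.length := by
  induction p with
  | nil => simp
  | cons h p ih =>
    rw [pathGraph_adj] at h
    simp only [Nat.dist, Walk.length_cons] at ih ⊢
    omega

theorem pathGraph_dist (u v : Fin n) : (pathGraph n).dist u v = Nat.dist u v := by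
  apply le_antisymm
  · rcases le_total u.val v.val with h | h
    · rw [Nat.dist_eq_sub_of_le h]
      exact pathGraph_dist_le_of_add_eq (by omega)
    · rw [dist_comm, Nat.dist_comm, Nat.dist_eq_sub_of_le h]
      exact pathGraph_dist_le_of_add_eq (by omega)
  · obtain ⟨p, hp⟩ := (pathGraph_preconnected n u v).exists_walk_length_eq_dist
    exact hp ▸ pathGraph_natDist_le_length p

end SimpleGraph

variable {n : ℕ}

def gather (C : Fin n → ℕ) (a b : ℕ) (t : Fin n) (k : ℕ) : Fin n → ℕ :=
  fun i => if i = t then k else if a ≤ i.val ∧ i.val ≤ b then 0 else C i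

theorem reflTransGen_gather_absorb {C : Fin n → ℕ} {a b : ℕ} {e t : Fin n}
    (hcollapse : ReflTransGen (CupMove (pathGraph n)) C (gather C a b e (b + 1 - a)))
    (hae : a ≤ e) (heb : e ≤ b) (ht : t < a ∨ b < t) (hdist : Nat.dist e t = b + 1 - a)
    (hCt : 1 ≤ C t) :
    ReflTransGen (CupMove (pathGraph n)) C (gather C a b t (C t + (b + 1 - a))) := by
  have hte : t ≠ e := fun h => by subst h; omega
  refine hcollapse.tail ?_
  convert CupMove.of_dist_eq (G := pathGraph n) (u := e) (v := t) ?_ ?_ ?_ using 1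
  · funext w
    simp only [gather, Fin.ext_iff] at hte ⊢
    split_ifs <;> omega
  all_goals simp only [gather, pathGraph_dist, if_neg hte]
  all_goals split_ifs <;> omega

theorem reflTransGen_gather_of_eq_one {C : Fin n → ℕ} {a b : ℕ} {t : Fin n}
    (hat : a ≤ t) (htb : t ≤ b) (hbn : b < n) (hC : ∀ i : Fin n, a ≤ i → i ≤ b → C i = 1) :
    ReflTransGen (CupMove (pathGraph n)) C (gather C a b t (b + 1 - a)) := by
  induction hℓ : b - a using Nat.strong_induction_on generalizing a b t C with
  | _ ℓ ih =>
  have hCt : C t = 1 := hC t hat htb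
  have hleft : ReflTransGen (CupMove (pathGraph n)) C (gather C a t t (t + 1 - a)) := by
    rcases eq_or_lt_of_le hat with hta | hta
    · convert ReflTransGen.refl using 1
      funext i
      simp only [gather, Fin.ext_iff]
      split_ifs <;> first | omega | (rw [hC i (by omega) (by omega)]; omega)
    · have hcollapse := ih (t - 1 - a) (by omega) (t := ⟨a, by omega⟩) (b := t - 1)
        le_rfl (show a ≤ t - 1 by omega) (by omega) (fun i h1 h2 => hC i h1 (by omega)) rfl
      convert reflTransGen_gather_absorb hcollapse le_rfl (show a ≤ t - 1 by omega) (by omega)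
        (by simp only [Nat.dist]; omega) hCt.ge using 1
      funext i
      simp only [gather, Fin.ext_iff, hCt]
      split_ifs <;> omega
  rcases eq_or_lt_of_le htb with htb | htb
  · subst htb
    exact hleft
  have hC₁ (i : Fin n) (h1 : t.val + 1 ≤ i) (h2 : i ≤ b) : gather C a t t (t + 1 - a) i = 1 := by
    simp only [gather, Fin.ext_iff]
    split_ifs <;> first | omega | exact hC i (by omega) h2
  have hcollapse := ih (b - (t + 1)) (by omega) (t := ⟨b, hbn⟩) (a := t + 1)
    (show t + 1 ≤ b by omega) le_rfl hbn hC₁ rfl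
  have hright := reflTransGen_gather_absorb (t := t) hcollapse (show t + 1 ≤ b by omega) le_rfl
    (by omega) (by simp only [Nat.dist]; omega) (by rw [gather, if_pos rfl]; omega)
  convert hleft.trans hright using 1
  funext i
  simp only [gather, Fin.ext_iff]
  split_ifs <;> omega

theorem pathGraph_stackable_general (n : ℕ) :
    IsStackable (SimpleGraph.pathGraph n) := by
  intro r
  have hr := r.isLt
  unfold IsStackableAt IsStackableConf
  convert reflTransGen_gather_of_eq_one (C := fun _ => 1) (Nat.zero_le r)
    (show r.val ≤ n - 1 by omega) (by omega) (fun _ _ _ => rfl) using 1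
  funext w
  simp only [Finset.sum_const, Finset.card_univ, Fintype.card_fin, smul_eq_mul, mul_one, gather,
    Fin.ext_iff]
  split_ifs <;> omega

theorem pathGraph_stackable (n : ℕ) (hn : 1 ≤ n) :
    IsStackable (SimpleGraph.pathGraph n) :=
  pathGraph_stackable_general n
end

section
/- For every n ≥ 3, the cycle C_n on n vertices is stackable. -/
/-!
Cups lying one per vertex along a geodesic `p 0, …, p b` can be stacked onto `p 0`: first stack
`p 1, …, p b` onto `p b` (the same statement for the reversed, shorter geodesic), then the `b` cups
on `p b` are at distance exactly `b` from `p 0`. In `C_n` the arcs `r, r + 1, …, r + ⌊n/2⌋` and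
`r, r - 1, …, r - (n - 1 - ⌊n/2⌋)` are geodesics covering the cycle, so stacking the first and then
the second onto `r` gathers all `n` cups there.
-/

open SimpleGraph Relation Finset Fin.NatCast Fin.CommRing

variable {V : Type*} {G : SimpleGraph V}

theorem cupMove_of_dist_eq [DecidableEq V] {C : V → ℕ} {u v : V} (huv : u ≠ v) (hu : 1 ≤ C u)
    (hv : 1 ≤ C v) (hd : G.dist u v = C u) :
    CupMove G C (fun w => if w = u then 0 else if w = v then C u + C v else C w) :=
  ⟨u, v, huv, hu, hv, hd, fun _ => rfl⟩

def IsGeodesic (G : SimpleGraph V) (p : ℕ → V) (b : ℕ) : Prop :=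
  ∀ i j, i ≤ j → j ≤ b → G.dist (p i) (p j) = j - i

namespace IsGeodesic

variable {p : ℕ → V} {b : ℕ}

theorem mono (hp : IsGeodesic G p b) {b' : ℕ} (hb : b' ≤ b) : IsGeodesic G p b' :=
  fun i j hij hj => hp i j hij (hj.trans hb)

theorem reverse (hp : IsGeodesic G p b) : IsGeodesic G (fun i => p (b - i)) b := by
  intro i j hij hj
  rw [dist_comm, hp (b - j) (b - i) (by omega) (by omega)]
  omega

theorem ne (hp : IsGeodesic G p b) {i j : ℕ} (hij : i < j) (hj : j ≤ b) : p i ≠ p j := by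
  intro h
  have := hp i j hij.le hj
  rw [h, dist_self] at this
  omega

theorem reflTransGen_cupMove_gather [DecidableEq V] (hp : IsGeodesic G p b) (C : V → ℕ)
    (hstart : 1 ≤ C (p 0)) (hones : ∀ i, 1 ≤ i → i ≤ b → C (p i) = 1) :
    ReflTransGen (CupMove G) C
      (fun w => if w = p 0 then C (p 0) + b
        else if w ∈ (range (b + 1)).image p then 0 else C w) := by
  induction b generalizing p C with
  | zero =>
    convert ReflTransGen.refl using 2 with w
    split_ifs <;> simp_all
  | succ b ih =>
    have hD := ih (hp.reverse.mono b.le_succ) C (by simp [hones (b + 1)])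
      (fun i hi hib => hones _ (by omega) (by omega))
    have hpb : C (p (b + 1)) = 1 := hones (b + 1) le_add_self le_rfl
    have hne : p (b + 1) ≠ p 0 := (hp.ne (Nat.succ_pos b) le_rfl).symm
    have hmem : ∀ w, w ∈ (range (b + 1)).image (fun i => p (b + 1 - i)) ↔
        ∃ i, 1 ≤ i ∧ i ≤ b + 1 ∧ p i = w := by
      intro w
      simp only [mem_image, mem_range]
      constructor
      · rintro ⟨i, hi, rfl⟩; exact ⟨b + 1 - i, by omega, by omega, rfl⟩
      · rintro ⟨i, hi, hib, rfl⟩; exact ⟨b + 1 - i, by omega, by congr 1; omega⟩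
    simp only [Nat.sub_zero, hpb] at hD
    set D := fun w => if w = p (b + 1) then 1 + b
      else if w ∈ (range (b + 1)).image (fun i => p (b + 1 - i)) then 0 else C w
    have hDu : D (p (b + 1)) = b + 1 := by simp [D, add_comm]
    have hDv : D (p 0) = C (p 0) := by
      have : ¬ ∃ i, 1 ≤ i ∧ i ≤ b + 1 ∧ p i = p 0 :=
        fun ⟨i, hi, hib, h⟩ => hp.ne (Nat.succ_le_iff.mp hi) hib h.symm
      simp [D, hne.symm, hmem, this]
    have hmove := cupMove_of_dist_eq (G := G) (C := D) hne (by omega) (by omega)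
      (by rw [hDu, dist_comm, hp 0 (b + 1) (by omega) le_rfl, Nat.sub_zero])
    convert hD.tail hmove using 1
    funext w
    rw [hDu, hDv]
    simp only [D, hmem, mem_image, mem_range]
    split_ifs <;> grind

end IsGeodesic

namespace Fin

variable {n : ℕ}

theorem val_sub_add_val_sub {u v : Fin n} (h : u ≠ v) : (u - v).val + (v - u).val = n := by
  have := coe_int_sub_eq_ite u v
  have := coe_int_sub_eq_ite v u
  simp only [Fin.le_iff_val_le_val] at *
  omega

theorem val_natCast_sub_natCast [NeZero n] {i j : ℕ} (hij : i ≤ j) (hj : j < n) :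
    ((j : Fin n) - (i : Fin n)).val = j - i := by
  rw [← Nat.cast_sub hij, val_natCast, Nat.mod_eq_of_lt (by omega)]

theorem exists_add_natCast_eq_iff [NeZero n] (u v : Fin n) {b : ℕ} (hb : b ≤ n) :
    (∃ i < b, u + (i : Fin n) = v) ↔ (v - u).val < b := by
  constructor
  · rintro ⟨i, hi, rfl⟩
    rwa [add_sub_cancel_left, val_natCast, Nat.mod_eq_of_lt (by omega)]
  · exact fun h => ⟨_, h, by rw [cast_val_eq_self, add_sub_cancel]⟩

theorem exists_sub_natCast_eq_iff [NeZero n] (u v : Fin n) {b : ℕ} (hb : b ≤ n) :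
    (∃ i < b, u - (i : Fin n) = v) ↔ (u - v).val < b := by
  simp only [sub_eq_iff_eq_add, eq_comm (a := u), exists_add_natCast_eq_iff v u hb]

end Fin

section CycleGraph

variable {n : ℕ}

theorem cycleGraph_exists_walk_add_natCast [NeZero n] (hn : 2 ≤ n) (u : Fin n) (k : ℕ) :
    ∃ p : (cycleGraph n).Walk u (u + k), p.length = k := by
  induction k with
  | zero => exact ⟨Walk.nil.copy rfl (by simp), by simp⟩
  | succ k ih =>
    obtain ⟨p, hp⟩ := ih
    have hadj : (cycleGraph n).Adj (u + k) (u + (k + 1 : ℕ)) := by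
      rw [cycleGraph_adj']
      right
      rw [Nat.cast_succ, ← add_assoc, add_sub_cancel_left, Fin.val_one', Nat.mod_eq_of_lt hn]
    exact ⟨p.concat hadj, by simp [hp]⟩

theorem cycleGraph_min_val_sub_le_length {u v : Fin n} (p : (cycleGraph n).Walk u v) :
    min (v - u).val (u - v).val ≤ p.length := by
  induction p with
  | nil => simp [Fin.sub_def]
  | @cons u w v hadj p ih =>
    rw [cycleGraph_adj'] at hadj
    have := Fin.coe_int_sub_eq_ite u w
    have := Fin.coe_int_sub_eq_ite w u
    have := Fin.coe_int_sub_eq_ite v w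
    have := Fin.coe_int_sub_eq_ite w v
    have := Fin.coe_int_sub_eq_ite u v
    have := Fin.coe_int_sub_eq_ite v u
    simp only [Fin.le_iff_val_le_val, Walk.length_cons] at *
    omega

theorem cycleGraph_dist_le (hn : 2 ≤ n) (u v : Fin n) :
    (cycleGraph n).dist u v ≤ (v - u).val := by
  have : NeZero n := ⟨by omega⟩
  obtain ⟨p, hp⟩ := cycleGraph_exists_walk_add_natCast hn u (v - u).val
  calc (cycleGraph n).dist u v
      = (cycleGraph n).dist u (u + ((v - u).val : ℕ)) := by
        rw [Fin.cast_val_eq_self, add_sub_cancel]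
    _ ≤ p.length := dist_le p
    _ = (v - u).val := hp

theorem cycleGraph_dist (hn : 2 ≤ n) (u v : Fin n) :
    (cycleGraph n).dist u v = min (v - u).val (u - v).val := by
  refine le_antisymm (le_min (cycleGraph_dist_le hn u v) ?_) ?_
  · exact dist_comm (G := cycleGraph n) ▸ cycleGraph_dist_le hn v u
  · obtain ⟨p, hp⟩ := (cycleGraph_preconnected u v).exists_walk_length_eq_dist
    exact hp ▸ cycleGraph_min_val_sub_le_length p

theorem cycleGraph_dist_eq_val_sub (hn : 2 ≤ n) {u v : Fin n} (h : 2 * (v - u).val ≤ n) :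
    (cycleGraph n).dist u v = (v - u).val := by
  rw [cycleGraph_dist hn]
  rcases eq_or_ne u v with rfl | huv
  · simp
  · have := Fin.val_sub_add_val_sub huv
    omega

theorem isGeodesic_cycleGraph_add [NeZero n] (hn : 2 ≤ n) (r : Fin n) {m : ℕ} (hm : 2 * m ≤ n) :
    IsGeodesic (cycleGraph n) (fun i => r + i) m := by
  intro i j hij hjm
  have hval := Fin.val_natCast_sub_natCast (n := n) hij (by omega)
  rw [cycleGraph_dist_eq_val_sub hn] <;> rw [add_sub_add_left_eq_sub, hval]
  omega

theorem isGeodesic_cycleGraph_sub [NeZero n] (hn : 2 ≤ n) (r : Fin n) {m : ℕ} (hm : 2 * m ≤ n) :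
    IsGeodesic (cycleGraph n) (fun i => r - i) m := by
  intro i j hij hjm
  have hval := Fin.val_natCast_sub_natCast (n := n) hij (by omega)
  rw [dist_comm, cycleGraph_dist_eq_val_sub hn] <;> rw [sub_sub_sub_cancel_left, hval]
  omega

end CycleGraph

theorem cycleGraph_stackable (n : ℕ) (hn : 3 ≤ n) :
    IsStackable (SimpleGraph.cycleGraph n) := by
  have : NeZero n := ⟨by omega⟩
  intro r
  unfold IsStackableAt IsStackableConf
  set m := n / 2
  set k := n - 1 - m
  have hstack₁ := (isGeodesic_cycleGraph_add (by omega) r (m := m) (by omega))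
    |>.reflTransGen_cupMove_gather (fun _ => 1) le_rfl (fun _ _ _ => rfl)
  simp only [Nat.cast_zero, add_zero, mem_image, mem_range,
    Fin.exists_add_natCast_eq_iff r _ (show m + 1 ≤ n by omega)] at hstack₁
  have hstack₂ := (isGeodesic_cycleGraph_sub (by omega) r (m := k) (by omega))
    |>.reflTransGen_cupMove_gather
      (fun w => if w = r then 1 + m else if (w - r).val < m + 1 then 0 else 1) (by simp) ?_
  · simp only [Nat.cast_zero, sub_zero, mem_image, mem_range,
      Fin.exists_sub_natCast_eq_iff r _ (show k + 1 ≤ n by omega)] at hstack₂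
    convert hstack₁.trans hstack₂ using 2 with w
    simp only [sum_const, card_univ, Fintype.card_fin, smul_eq_mul, mul_one, if_true]
    split_ifs with hw <;> try omega
    have := Fin.val_sub_add_val_sub hw
    omega
  · intro i hi hik
    have hval : (r - (r - (i : Fin n))).val = i := by
      rw [sub_sub_cancel, Fin.val_natCast, Nat.mod_eq_of_lt (by omega)]
    have hne : r - (i : Fin n) ≠ r := fun h => by rw [h, sub_self, Fin.val_zero] at hval; omega
    have := Fin.val_sub_add_val_sub hne
    simp only [hne, if_false]
    split_ifs <;> omega
end

section
/- Let T be a finite tree and r a vertex of T such that every vertex of T other than r has degree at most 2 (that is, T is a spider rooted at r: the union of paths emanating from r, including the case of a path). Then T is r-stackable. -/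
/-!
Keep one cup on each vertex of a set `A ∌ r` and all other cups on `r`, where `A` is closed
toward `r`: a neighbour of a vertex of `A` that is closer to `r` is `r` or lies in `A`. Initially
`A` is everything but `r`. If `a ∈ A` is farthest from `r`, at distance `d`, closedness yields a
geodesic `r = x 0, …, x d = a` with `x 1, …, x d ∈ A`. Its `d` cups reach `r` by a zig-zag:
recursively, along the reversed geodesic, stack `x 1, …, x (d-1)` onto `x d`, then jump the `d`
steps to `r`. Removing the geodesic keeps `A` closed: a vertex of `A` off it with a neighbour
`x i` closer to `r` would be a third neighbour of `x i`, besides `x (i-1)` and `x (i+1)`, while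
vertices other than `r` have degree at most 2.
-/

open Finset

namespace SimpleGraph

variable {V : Type*} {G : SimpleGraph V}

def IsGeodesic (G : SimpleGraph V) (x : ℕ → V) (n : ℕ) : Prop :=
  ∀ i j, i ≤ j → j ≤ n → G.dist (x i) (x j) = j - i

namespace IsGeodesic

variable {x : ℕ → V} {n : ℕ}

lemma mono (hx : G.IsGeodesic x n) {m : ℕ} (hmn : m ≤ n) : G.IsGeodesic x m :=
  fun i j hij hj => hx i j hij (hj.trans hmn)

lemma reflect (hx : G.IsGeodesic x n) : G.IsGeodesic (fun i => x (n - i)) n := by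
  intro i j hij hj
  rw [dist_comm, hx _ _ (by omega) (by omega)]
  omega

lemma ne (hx : G.IsGeodesic x n) {i j : ℕ} (hij : i < j) (hj : j ≤ n) : x i ≠ x j := by
  intro h
  have := hx i j hij.le hj
  rw [h, dist_self] at this
  omega

lemma injOn (hx : G.IsGeodesic x n) : Set.InjOn x (Set.Iic n) := by
  intro i hi j hj h
  by_contra hij
  rcases Nat.lt_or_gt_of_ne hij with hlt | hlt
  · exact hx.ne hlt hj h
  · exact hx.ne hlt hi h.symm

lemma adj_succ (hx : G.IsGeodesic x n) {i : ℕ} (hi : i + 1 ≤ n) : G.Adj (x i) (x (i + 1)) :=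
  dist_eq_one_iff_adj.mp (by rw [hx i (i + 1) (by omega) hi]; omega)

lemma adj_pred (hx : G.IsGeodesic x n) {i : ℕ} (hi : 1 ≤ i) (hin : i ≤ n) :
    G.Adj (x i) (x (i - 1)) :=
  (dist_eq_one_iff_adj.mp (by rw [hx (i - 1) i (by omega) hin]; omega)).symm

lemma update (hconn : G.Connected) (hx : G.IsGeodesic x n) {a : V} (hadj : G.Adj (x n) a)
    (ha : G.dist (x 0) a = n + 1) : G.IsGeodesic (Function.update x (n + 1) a) (n + 1) := by
  intro i j hij hj
  obtain hj | rfl : j < n + 1 ∨ j = n + 1 := by omega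
  · rw [Function.update_of_ne (by omega), Function.update_of_ne (by omega)]
    exact hx i j hij (by omega)
  obtain hi | rfl : i < n + 1 ∨ i = n + 1 := by omega
  · rw [Function.update_self, Function.update_of_ne (by omega)]
    have hup : G.dist (x i) a ≤ G.dist (x i) (x n) + G.dist (x n) a := hconn.dist_triangle
    have hlow : G.dist (x 0) a ≤ G.dist (x 0) (x i) + G.dist (x i) a := hconn.dist_triangle
    rw [dist_eq_one_iff_adj.mpr hadj, hx i n (by omega) le_rfl] at hup
    rw [hx 0 i (by omega) (by omega)] at hlow
    omega
  · simp

end IsGeodesic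

lemma exists_adj_dist_eq {r v : V} {d : ℕ} (h : G.dist r v = d + 1) :
    ∃ u, G.Adj v u ∧ G.dist r u = d := by
  obtain ⟨p, hp⟩ : ∃ p : G.Walk v r, p.length = G.dist r v := by
    rw [dist_comm]
    exact exists_walk_of_dist_ne_zero (by rw [dist_comm]; omega)
  cases p with
  | nil => simp at h
  | cons hadj q =>
    refine ⟨_, hadj, ?_⟩
    have hle := dist_le q
    rw [Walk.length_cons] at hp
    rw [dist_comm] at hle
    rcases hadj.diff_dist_adj (u := r) with h' | h' | h' <;> omega

lemma three_le_degree {v a b c : V} [Fintype (G.neighborSet v)] (ha : G.Adj v a)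
    (hb : G.Adj v b) (hc : G.Adj v c) (hab : a ≠ b) (hac : a ≠ c) (hbc : b ≠ c) :
    3 ≤ G.degree v := by
  classical
  rw [← card_neighborFinset_eq_degree]
  calc 3 = #{a, b, c} := (card_eq_three.mpr ⟨a, b, c, hab, hac, hbc, rfl⟩).symm
    _ ≤ _ := card_le_card fun w => by
      simp only [mem_insert, mem_singleton, mem_neighborFinset]
      rintro (rfl | rfl | rfl) <;> assumption

variable [DecidableEq V]

def IsClosedToward (G : SimpleGraph V) (r : V) (A : Finset V) : Prop :=
  ∀ a ∈ A, ∀ b, G.Adj a b → G.dist r b < G.dist r a → b ∈ insert r A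

namespace IsClosedToward

variable {r : V} {A : Finset V}

lemma exists_isGeodesic (hconn : G.Connected) (hA : G.IsClosedToward r A) {a : V}
    (ha : a ∈ insert r A) : ∃ x, G.IsGeodesic x (G.dist r a) ∧ x 0 = r ∧
      x (G.dist r a) = a ∧ ∀ i ≤ G.dist r a, x i ∈ insert r A := by
  generalize hd : G.dist r a = d
  induction d generalizing a with
  | zero =>
    refine ⟨fun _ => r, fun i j _ _ => by rw [dist_self]; omega, rfl,
      hconn.dist_eq_zero_iff.mp hd, fun _ _ => mem_insert_self r A⟩
  | succ d ih =>
    obtain ⟨b, hab, hb⟩ := exists_adj_dist_eq hd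
    have haA : a ∈ A := (mem_insert.mp ha).resolve_left (by rintro rfl; simp at hd)
    obtain ⟨x, hx, hx0, hxd, hxA⟩ := ih (hA a haA b hab (by omega)) hb
    refine ⟨Function.update x (d + 1) a, hx.update hconn (hxd ▸ hab.symm) (by rw [hx0, hd]),
      by simp [hx0], by simp, fun i hi => ?_⟩
    obtain hi | rfl : i < d + 1 ∨ i = d + 1 := by omega
    · rw [Function.update_of_ne (by omega)]
      exact hxA i (by omega)
    · rwa [Function.update_self]

lemma sdiff_image [Fintype V] [DecidableRel G.Adj] (hdeg : ∀ v, v ≠ r → G.degree v ≤ 2)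
    (hA : G.IsClosedToward r A) {x : ℕ → V} {d : ℕ} (hx : G.IsGeodesic x d) (hx0 : x 0 = r)
    (hfar : ∀ a ∈ A, G.dist r a ≤ d) : G.IsClosedToward r (A \ (Icc 1 d).image x) := by
  intro p hp b hpb hlt
  obtain ⟨hpA, hpS⟩ := mem_sdiff.mp hp
  by_cases hbS : b ∈ (Icc 1 d).image x
  · exfalso
    obtain ⟨i, hi, rfl⟩ := mem_image.mp hbS
    rw [mem_Icc] at hi
    have hxi : G.dist r (x i) = i := by rw [← hx0, hx 0 i (by omega) hi.2]; omega
    have hpi : G.dist r p = i + 1 := by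
      rcases hpb.diff_dist_adj (u := r) with h | h | h <;> omega
    have hid : i + 1 ≤ d := hpi ▸ hfar p hpA
    have hp_succ : p ≠ x (i + 1) := fun h =>
      hpS (mem_image.mpr ⟨i + 1, mem_Icc.mpr ⟨by omega, hid⟩, h.symm⟩)
    have hp_pred : p ≠ x (i - 1) := by
      intro h
      have := hx 0 (i - 1) (by omega) (by omega)
      rw [hx0, ← h, hpi] at this
      omega
    have h3 := three_le_degree hpb.symm (hx.adj_succ hid) (hx.adj_pred hi.1 hi.2)
      hp_succ hp_pred (hx.ne (by omega) hid).symm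
    have h2 := hdeg _ (hx0 ▸ (hx.ne (by omega) hi.2).symm)
    omega
  · have hb := hA p hpA b hpb hlt
    rw [mem_insert] at hb ⊢
    exact hb.imp_right fun hbA => mem_sdiff.mpr ⟨hbA, hbS⟩

end IsClosedToward

end SimpleGraph

namespace CupStacking

open SimpleGraph

variable {V : Type*} [DecidableEq V] {G : SimpleGraph V}

def pile (C : V → ℕ) (S : Finset V) (v : V) (k : ℕ) : V → ℕ :=
  fun w => if w = v then k else if w ∈ S then 0 else C w

lemma cupMove_pile {C : V → ℕ} {u v : V} (huv : u ≠ v) (hu : 1 ≤ C u) (hv : 1 ≤ C v)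
    (hdist : G.dist u v = C u) : CupMove G C (pile C {u} v (C u + C v)) := by
  refine ⟨u, v, huv, hu, hv, hdist, fun w => ?_⟩
  by_cases hwu : w = u <;> simp [pile, hwu, huv]

lemma pile_pile (C : V → ℕ) (S : Finset V) (u v : V) (k l : ℕ) :
    pile (pile C S u k) {u} v l = pile C (insert u S) v l := by
  funext w
  by_cases hwu : w = u <;> simp [pile, hwu]

lemma image_Icc_reflect (x : ℕ → V) (n : ℕ) :
    (Icc 1 n).image (fun i => x (n + 1 - i)) = (Icc 1 n).image x := by
  ext w
  simp only [mem_image, mem_Icc]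
  constructor
  · rintro ⟨i, hi, rfl⟩
    exact ⟨n + 1 - i, by omega, rfl⟩
  · rintro ⟨i, hi, rfl⟩
    exact ⟨n + 1 - i, by omega, by rw [Nat.sub_sub_self (by omega)]⟩

theorem reflTransGen_pile_of_isGeodesic {x : ℕ → V} {n : ℕ} (hx : G.IsGeodesic x n)
    {C : V → ℕ} (h0 : 1 ≤ C (x 0)) (hone : ∀ i ∈ Icc 1 n, C (x i) = 1) :
    Relation.ReflTransGen (CupMove G) C (pile C ((Icc 1 n).image x) (x 0) (C (x 0) + n)) := by
  induction n generalizing x C with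
  | zero =>
    convert Relation.ReflTransGen.refl using 1
    funext w
    by_cases hw : w = x 0 <;> simp [pile, hw]
  | succ n ih =>
    have hlast : C (x (n + 1)) = 1 := hone _ (by simp)
    have hstack := ih (hx.reflect.mono n.le_succ) (by simp [hlast]) fun i hi =>
      hone _ (by simp only [mem_Icc] at hi ⊢; omega)
    simp only [Nat.sub_zero, hlast, image_Icc_reflect] at hstack
    set D := pile C ((Icc 1 n).image x) (x (n + 1)) (1 + n)
    have hD_last : D (x (n + 1)) = 1 + n := by simp [D, pile]
    have hD_first : D (x 0) = C (x 0) := by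
      have hx0 : x 0 ∉ (Icc 1 n).image x := by
        simp only [mem_image, mem_Icc, not_exists, not_and]
        exact fun i hi => (hx.ne (by omega) (by omega)).symm
      simp [D, pile, hx.ne n.succ_pos le_rfl, hx0]
    have hjump : G.dist (x (n + 1)) (x 0) = D (x (n + 1)) := by
      rw [hD_last, SimpleGraph.dist_comm, hx 0 (n + 1) (Nat.zero_le _) le_rfl]
      omega
    have hmove := cupMove_pile (hx.ne n.succ_pos le_rfl).symm (by rw [hD_last]; omega)
      (hD_first ▸ h0) hjump
    rw [hD_last, hD_first, pile_pile, ← image_insert,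
      insert_Icc_right_eq_Icc_add_one (by omega)] at hmove
    convert hstack.tail hmove using 2
    omega

def rootConf (r : V) (A : Finset V) (c : ℕ) : V → ℕ :=
  fun w => if w = r then c else if w ∈ A then 1 else 0

lemma pile_rootConf (r : V) (A S : Finset V) (c k : ℕ) :
    pile (rootConf r A c) S r k = rootConf r (A \ S) k := by
  funext w
  by_cases hwr : w = r <;> by_cases hwS : w ∈ S <;> simp [pile, rootConf, hwr, hwS]

lemma sum_rootConf [Fintype V] {r : V} {A : Finset V} (hrA : r ∉ A) (c : ℕ) :
    ∑ w, rootConf r A c w = c + #A := by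
  rw [← add_sum_erase _ _ (mem_univ r)]
  simp only [rootConf, if_true]
  rw [sum_congr rfl fun w hw => if_neg (ne_of_mem_erase hw), sum_boole, Nat.cast_id,
    filter_mem_eq_inter, inter_eq_right.mpr fun w hw => mem_erase.mpr
      ⟨ne_of_mem_of_not_mem hw hrA, mem_univ w⟩]

theorem isStackableConf_rootConf [Fintype V] [DecidableRel G.Adj] (hconn : G.Connected)
    {r : V} (hdeg : ∀ v, v ≠ r → G.degree v ≤ 2) {A : Finset V} (hrA : r ∉ A)
    (hA : G.IsClosedToward r A) {c : ℕ} (hc : 1 ≤ c) :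
    IsStackableConf G (rootConf r A c) r := by
  induction A using Finset.strongInduction generalizing c with
  | H A ih =>
  rw [IsStackableConf, sum_rootConf hrA]
  rcases A.eq_empty_or_nonempty with rfl | hne
  · convert Relation.ReflTransGen.refl using 1
    funext w
    by_cases hw : w = r <;> simp [rootConf, hw]
  obtain ⟨a, haA, hfar⟩ := exists_max_image A (G.dist r) hne
  obtain ⟨x, hx, hx0, hxa, hxA⟩ := hA.exists_isGeodesic hconn (mem_insert_of_mem haA)
  set d := G.dist r a
  set S := (Icc 1 d).image x
  have hd : 1 ≤ d := hconn.pos_dist_of_ne fun h => hrA (h ▸ haA)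
  have hxr : ∀ i ∈ Icc 1 d, x i ≠ r := fun i hi =>
    hx0 ▸ (hx.ne (mem_Icc.mp hi).1 (mem_Icc.mp hi).2).symm
  have hSA : S ⊆ A := by
    intro w hw
    obtain ⟨i, hi, rfl⟩ := mem_image.mp hw
    exact (mem_insert.mp (hxA i (mem_Icc.mp hi).2)).resolve_left (hxr i hi)
  have haS : a ∈ S := hxa ▸ mem_image_of_mem x (mem_Icc.mpr ⟨hd, le_rfl⟩)
  have hcardS : #S = d := by
    rw [card_image_of_injOn (hx.injOn.mono fun i hi => (mem_Icc.mp hi).2), Nat.card_Icc]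
    omega
  have hrS : r ∉ A \ S := fun h => hrA (mem_sdiff.mp h).1
  have hgather : Relation.ReflTransGen (CupMove G) (rootConf r A c)
      (rootConf r (A \ S) (c + d)) := by
    have := reflTransGen_pile_of_isGeodesic hx (C := rootConf r A c)
      (by simp [rootConf, hx0, hc])
      fun i hi => by simp [rootConf, hxr i hi, hSA (mem_image_of_mem x hi)]
    rwa [hx0, show rootConf r A c r = c by simp [rootConf], pile_rootConf] at this
  have hrest := ih (A \ S) (sdiff_ssubset hSA ⟨a, haS⟩) hrS (hA.sdiff_image hdeg hx hx0 hfar)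
    (c := c + d) (by omega)
  rw [IsStackableConf, sum_rootConf hrS, card_sdiff_of_subset hSA, hcardS] at hrest
  convert hgather.trans hrest using 3
  have := card_le_card hSA
  omega

end CupStacking

theorem spider_stackable {V : Type*} [Fintype V] [DecidableEq V]
    (T : SimpleGraph V) [DecidableRel T.Adj] (hT : T.IsTree) (r : V)
    (hdeg : ∀ v : V, v ≠ r → T.degree v ≤ 2) :
    IsStackableAt T r := by
  have hclosed : T.IsClosedToward r (univ.erase r) := fun _ _ b _ _ => by simp
  have hones : CupStacking.rootConf r (univ.erase r) 1 = fun _ => 1 := by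
    funext w
    by_cases hw : w = r <;> simp [CupStacking.rootConf, hw]
  rw [IsStackableAt, ← hones]
  exact CupStacking.isStackableConf_rootConf hT.connected hdeg (notMem_erase r univ) hclosed le_rfl
end

section
/- For every d with 1 ≤ d ≤ 20, the d-dimensional hypercube Q^d is stackable. -/
open scoped symmDiff in
/-- The d-dimensional hypercube: vertices are subsets of {1,…,d}, adjacent iff
the symmetric difference has exactly one element. -/
def cubeGraph (d : ℕ) : SimpleGraph (Finset (Fin d)) :=
  SimpleGraph.fromRel (fun X Y => (X ∆ Y).card = 1)

open scoped symmDiff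
open Finset Function

namespace CupStacking

section Gather

variable {V : Type*} [DecidableEq V]

def CanGather (G : SimpleGraph V) (R : Finset V) (r : V) : Prop :=
  r ∉ R ∧ ∀ C : V → ℕ, (∀ v ∈ R, C v = 1) → 1 ≤ C r →
    Relation.ReflTransGen (CupMove G) C
      (fun v => if v ∈ R then 0 else if v = r then C r + #R else C v)

variable {G : SimpleGraph V} {r : V}

lemma canGather_empty : CanGather G ∅ r := by
  refine ⟨notMem_empty r, fun C _ _ => ?_⟩
  convert Relation.ReflTransGen.refl using 1
  ext w
  by_cases hw : w = r
  · subst hw; simp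
  · simp [hw]

lemma CanGather.union {R₁ R₂ : Finset V} (hd : Disjoint R₁ R₂) (h₁ : CanGather G R₁ r)
    (h₂ : CanGather G R₂ r) : CanGather G (R₁ ∪ R₂) r := by
  refine ⟨by simp [h₁.1, h₂.1], fun C hC hCr =>
    (h₁.2 C (fun v hv => hC v (mem_union_left _ hv)) hCr).trans ?_⟩
  convert h₂.2 _ (fun v hv => ?_) ?_ using 2 with w
  · by_cases hw₂ : w ∈ R₂
    · simp [hw₂]
    by_cases hwr : w = r
    · simp [hwr, h₁.1, h₂.1, card_union_of_disjoint hd, add_assoc]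
    · simp [hw₂, hwr]
  · have hv₁ : v ∉ R₁ := disjoint_right.mp hd hv
    have hvr : v ≠ r := by rintro rfl; exact h₂.1 hv
    simp [hv₁, hvr, hC v (mem_union_right _ hv)]
  · simp only [h₁.1, if_false, if_true]; omega

lemma isStackableAt_of_canGather [Fintype V] (h : CanGather G (univ.erase r) r) :
    IsStackableAt G r := by
  unfold IsStackableAt IsStackableConf
  convert h.2 (fun _ => 1) (fun _ _ => rfl) le_rfl using 2 with w
  by_cases hw : w = r
  · have := Fintype.card_pos_iff.mpr ⟨r⟩
    simp [hw, card_erase_of_mem]; omega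
  · simp [hw]

end Gather

section Transfer

variable {α : Type*} [DecidableEq α]

def transfer (A : α → ℕ) (u v : α) : α → ℕ :=
  fun w => if w = u then 0 else if w = v then A u + A v else A w

variable [Fintype α] (A : α → ℕ)

lemma sum_transfer {u v : α} (h : u ≠ v) : ∑ w, transfer A u v w = ∑ w, A w := by
  have key : ∀ w, transfer A u v w + (if w = u then A u else 0) =
      A w + if w = v then A u else 0 := by
    intro w; unfold transfer; split_ifs <;> simp_all [add_comm]
  have := sum_congr rfl fun w (_ : w ∈ univ) => key w
  simp only [sum_add_distrib, sum_ite_eq', mem_univ, if_true] at this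
  omega

lemma add_sum_update_zero (u : α) : A u + ∑ w, update A u 0 w = ∑ w, A w := by
  rw [sum_update_of_mem (mem_univ u), zero_add,
    sum_eq_add_sum_sdiff_singleton_of_mem (mem_univ u) A]

end Transfer

section Replay

variable {V : Type*} [DecidableEq V] {G : SimpleGraph V} {M j : ℕ}

/-- `replay j L A` plays the moves `L` on the configuration `A` of a copy of `Q^M` whose vertex
`u` lies at distance `#u + j` from a root outside it: `(u, some v)` moves the pile on `u` onto
`v` and `(u, none)` moves it onto the root. It checks that every move is legal and that the copy
ends up empty. -/
def replay (j : ℕ) :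
    List (Finset (Fin M) × Option (Finset (Fin M))) → (Finset (Fin M) → ℕ) → Bool
  | [], A => decide (∀ X, A X = 0)
  | (u, some v) :: L, A =>
      decide (u ≠ v ∧ 1 ≤ A u ∧ 1 ≤ A v ∧ #(u ∆ v) = A u) && replay j L (transfer A u v)
  | (u, none) :: L, A =>
      decide (1 ≤ A u ∧ #u + j = A u) && replay j L (update A u 0)

variable {φ : Finset (Fin M) → V} {r : V} {A : Finset (Fin M) → ℕ} {B : V → ℕ}
  {u v : Finset (Fin M)}

lemma cupMove_extend (hφ : Injective φ) (huv : u ≠ v) (hu : 1 ≤ A u) (hv : 1 ≤ A v)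
    (hd : G.dist (φ u) (φ v) = A u) :
    CupMove G (extend φ A B) (extend φ (transfer A u v) B) := by
  refine ⟨φ u, φ v, hφ.ne huv, by simpa [hφ.extend_apply], by simpa [hφ.extend_apply],
    by simpa [hφ.extend_apply], fun w => ?_⟩
  by_cases hw : ∃ X, φ X = w
  · obtain ⟨X, rfl⟩ := hw
    simp [hφ.extend_apply, hφ.eq_iff, transfer]
  · have hwu : w ≠ φ u := fun h => hw ⟨u, h.symm⟩
    have hwv : w ≠ φ v := fun h => hw ⟨v, h.symm⟩
    simp [extend_apply' _ _ _ hw, hwu, hwv]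

lemma cupMove_extend_root (hφ : Injective φ) (hr : ∀ X, φ X ≠ r) (hu : 1 ≤ A u) (hB : 1 ≤ B r)
    (hd : G.dist (φ u) r = A u) :
    CupMove G (extend φ A B) (extend φ (update A u 0) (update B r (B r + A u))) := by
  have hrφ : ¬∃ X, φ X = r := fun ⟨X, hX⟩ => hr X hX
  refine ⟨φ u, r, hr u, by simpa [hφ.extend_apply], by simpa [extend_apply' _ _ _ hrφ],
    by simpa [hφ.extend_apply], fun w => ?_⟩
  by_cases hw : ∃ X, φ X = w
  · obtain ⟨X, rfl⟩ := hw
    simp [hφ.extend_apply, hφ.eq_iff, hr X, update_apply]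
  · have hwu : w ≠ φ u := fun h => hw ⟨u, h.symm⟩
    by_cases hwr : w = r
    · subst hwr
      simp [extend_apply' _ _ _ hw, hφ.extend_apply, hwu, add_comm]
    · simp [extend_apply' _ _ _ hw, hwu, hwr]

lemma reflTransGen_extend_of_replay (hφ : Injective φ) (hr : ∀ X, φ X ≠ r)
    (hdist : ∀ X Y, G.dist (φ X) (φ Y) = #(X ∆ Y)) (hroot : ∀ X, G.dist (φ X) r = #X + j) :
    ∀ (L : List (Finset (Fin M) × Option (Finset (Fin M)))) (A : Finset (Fin M) → ℕ) (B : V → ℕ),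
      replay j L A = true → 1 ≤ B r →
      Relation.ReflTransGen (CupMove G) (extend φ A B) (extend φ 0 (update B r (B r + ∑ X, A X)))
  | [], A, B, hL, _ => by
    simp only [replay, decide_eq_true_eq] at hL
    obtain rfl : A = 0 := funext hL
    simpa using .refl
  | (u, some v) :: L, A, B, hL, hB => by
    simp only [replay, Bool.and_eq_true, decide_eq_true_eq] at hL
    obtain ⟨⟨huv, hu, hv, hd⟩, hL⟩ := hL
    refine .head (cupMove_extend hφ huv hu hv (by rw [hdist, hd])) ?_
    simpa only [sum_transfer A huv] using
      reflTransGen_extend_of_replay hφ hr hdist hroot L _ B hL hB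
  | (u, none) :: L, A, B, hL, hB => by
    simp only [replay, Bool.and_eq_true, decide_eq_true_eq] at hL
    obtain ⟨⟨hu, hd⟩, hL⟩ := hL
    refine .head (cupMove_extend_root hφ hr hu hB (by rw [hroot, hd])) ?_
    convert reflTransGen_extend_of_replay hφ hr hdist hroot L _ (update B r (B r + A u)) hL
      (by rw [update_self]; omega) using 2
    simp [add_assoc, add_sum_update_zero]

theorem canGather_of_replay (hj : 1 ≤ j) (hdist : ∀ X Y, G.dist (φ X) (φ Y) = #(X ∆ Y))
    (hroot : ∀ X, G.dist (φ X) r = #X + j) {L : List (Finset (Fin M) × Option (Finset (Fin M)))}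
    (hL : replay j L (fun _ => 1) = true) : CanGather G (univ.image φ) r := by
  have hφ : Injective φ := fun X Y h => by
    simpa [h, eq_comm (a := 0)] using hdist X Y
  have hr : ∀ X, φ X ≠ r := fun X h => by
    have := hroot X
    rw [h, SimpleGraph.dist_self] at this
    omega
  refine ⟨by simpa using hr, fun C hC hCr => ?_⟩
  convert reflTransGen_extend_of_replay hφ hr hdist hroot L _ C hL hCr using 1 <;> ext w <;>
    by_cases hw : ∃ X, φ X = w
  · obtain ⟨X, rfl⟩ := hw
    simp [hφ.extend_apply, hC]
  · simp [extend_apply' _ _ _ hw]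
  · obtain ⟨X, rfl⟩ := hw
    simp [hφ.extend_apply]
  · simp only [mem_image, mem_univ, true_and, hw, if_false, extend_apply' _ _ _ hw]
    by_cases hwr : w = r
    · simp [hwr, card_image_of_injective _ hφ]
    · simp [hwr]

end Replay

section Cube

variable {d : ℕ}

lemma cubeGraph_adj {X Y : Finset (Fin d)} : (cubeGraph d).Adj X Y ↔ #(X ∆ Y) = 1 := by
  rw [cubeGraph, SimpleGraph.fromRel_adj, symmDiff_comm Y, or_self, and_iff_right_iff_imp]
  rintro h rfl
  simp at h

lemma exists_walk_cubeGraph (X D : Finset (Fin d)) :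
    ∃ w : (cubeGraph d).Walk X (X ∆ D), w.length = #D := by
  induction D using Finset.induction_on with
  | empty => exact ⟨SimpleGraph.Walk.nil.copy rfl (symmDiff_bot X).symm, by simp⟩
  | @insert a D ha ih =>
    obtain ⟨w, hw⟩ := ih
    have hadj : (cubeGraph d).Adj (X ∆ D) (X ∆ insert a D) := by
      have : (X ∆ D) ∆ (X ∆ insert a D) = {a} := by
        ext x
        by_cases hx : x = a <;> simp [mem_symmDiff, hx, ha] <;> tauto
      rw [cubeGraph_adj, this, card_singleton]
    exact ⟨w.concat hadj, by simp [hw, card_insert_of_notMem ha]⟩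

lemma card_symmDiff_le_length {X Y : Finset (Fin d)} (w : (cubeGraph d).Walk X Y) :
    #(X ∆ Y) ≤ w.length := by
  induction w with
  | nil => simp
  | @cons X Z Y hadj w ih =>
    rw [cubeGraph_adj] at hadj
    calc #(X ∆ Y) ≤ #(X ∆ Z ∪ Z ∆ Y) := card_le_card (symmDiff_triangle X Z Y)
      _ ≤ #(X ∆ Z) + #(Z ∆ Y) := card_union_le _ _
      _ ≤ (w.cons _).length := by simp; omega

lemma cubeGraph_dist (X Y : Finset (Fin d)) : (cubeGraph d).dist X Y = #(X ∆ Y) := by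
  have hw := exists_walk_cubeGraph X (X ∆ Y)
  rw [symmDiff_symmDiff_cancel_left] at hw
  obtain ⟨w, hw⟩ := hw
  obtain ⟨p, hp⟩ := w.reachable.exists_walk_length_eq_dist
  exact le_antisymm (hw ▸ SimpleGraph.dist_le w) (hp ▸ card_symmDiff_le_length p)

end Cube

section Subcube

variable {d : ℕ}

def subcube (r T U : Finset (Fin d)) : Finset (Finset (Fin d)) :=
  {X | T ⊆ X ∆ r ∧ X ∆ r ⊆ U}

variable {r T U X : Finset (Fin d)}

@[simp]
lemma mem_subcube : X ∈ subcube r T U ↔ T ⊆ X ∆ r ∧ X ∆ r ⊆ U := by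
  simp [subcube]

lemma subcube_eq_union (a : Fin d) :
    subcube r T U = subcube r T (U.erase a) ∪ subcube r (insert a T) U := by
  ext X
  by_cases hX : a ∈ X ∆ r <;> simp [hX, insert_subset_iff, subset_erase]

lemma disjoint_subcube_erase_insert (a : Fin d) :
    Disjoint (subcube r T (U.erase a)) (subcube r (insert a T) U) := by
  rw [disjoint_left]
  intro X h₁ h₂
  exact notMem_erase a U ((mem_subcube.mp h₁).2 (insert_subset_iff.mp (mem_subcube.mp h₂).1).1)

theorem canGather_subcube_of_replay {M : ℕ} (hTU : T ⊆ U) (hM : #(U \ T) = M) (hT : 1 ≤ #T)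
    {L : List (Finset (Fin M) × Option (Finset (Fin M)))}
    (hL : replay (#T) L (fun _ => 1) = true) :
    CanGather (cubeGraph d) (subcube r T U) r := by
  set e := (U \ T).orderEmbOfFin hM
  have he : Injective e := e.injective
  have hrange : ∀ X : Finset (Fin M), X.image e ⊆ U \ T := fun X =>
    (image_subset_image (subset_univ X)).trans (image_orderEmbOfFin_univ _ hM).le
  have hdisj : ∀ X : Finset (Fin M), Disjoint (X.image e) T := fun X =>
    disjoint_sdiff_self_left.mono_left (hrange X)
  let φ : Finset (Fin M) → Finset (Fin d) := fun X => X.image e ∆ T ∆ r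
  have himage : univ.image φ = subcube r T U := by
    ext Y
    simp only [mem_image, mem_univ, true_and, mem_subcube]
    constructor
    · rintro ⟨X, rfl⟩
      rw [symmDiff_symmDiff_cancel_right, (hdisj X).symmDiff_eq_sup, sup_eq_union]
      exact ⟨subset_union_right, union_subset ((hrange X).trans sdiff_subset) hTU⟩
    · rintro ⟨hTY, hYU⟩
      obtain ⟨X, -, hX⟩ := subset_image_iff.mp
        ((sdiff_subset_sdiff hYU le_rfl).trans (image_orderEmbOfFin_univ _ hM).ge)
      refine ⟨X, ?_⟩
      change X.image e ∆ T ∆ r = Y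
      rw [hX, disjoint_sdiff_self_left.symmDiff_eq_sup, sup_eq_union, sdiff_union_of_subset hTY,
        symmDiff_symmDiff_cancel_right]
  rw [← himage]
  refine canGather_of_replay hT (fun X Y => ?_) (fun X => ?_) hL
  · rw [cubeGraph_dist, ← card_image_of_injective _ he, image_symmDiff _ _ he]
    simp only [φ, symmDiff_symmDiff_symmDiff_comm _ r, symmDiff_self, symmDiff_bot,
      symmDiff_symmDiff_symmDiff_comm _ T]
  · rw [cubeGraph_dist, symmDiff_symmDiff_cancel_right, (hdisj X).symmDiff_eq_sup,
      sup_eq_union, card_union_of_disjoint (hdisj X), card_image_of_injective _ he]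

end Subcube

section Gatherable

def SubcubeGatherable (j m : ℕ) : Prop :=
  ∀ ⦃d : ℕ⦄ (r : Finset (Fin d)) ⦃T U : Finset (Fin d)⦄, T ⊆ U → #T = j → #(U \ T) = m →
    CanGather (cubeGraph d) (subcube r T U) r

variable {j m : ℕ}

lemma subcubeGatherable_of_replay (hj : 1 ≤ j)
    {L : List (Finset (Fin m) × Option (Finset (Fin m)))} (hL : replay j L (fun _ => 1) = true) :
    SubcubeGatherable j m := by
  rintro d r T U hTU rfl hM
  exact canGather_subcube_of_replay hTU hM hj hL

lemma SubcubeGatherable.succ (h₁ : SubcubeGatherable j m) (h₂ : SubcubeGatherable (j + 1) m) :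
    SubcubeGatherable j (m + 1) := by
  intro d r T U hTU hT hM
  obtain ⟨a, ha⟩ : (U \ T).Nonempty := by rw [← card_pos, hM]; omega
  have hm : #((U \ T).erase a) = m := by rw [card_erase_of_mem ha, hM]; rfl
  rw [mem_sdiff] at ha
  rw [subcube_eq_union a]
  refine (h₁ r (subset_erase.mpr ⟨hTU, ha.2⟩) hT ?_).union (disjoint_subcube_erase_insert a)
    (h₂ r (insert_subset ha.1 hTU) ?_ ?_)
  · rwa [erase_sdiff_comm]
  · rw [card_insert_of_notMem ha.2, hT]
  · rwa [sdiff_insert]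

end Gatherable

def gatherMoves : (M j : ℕ) → List (Finset (Fin M) × Option (Finset (Fin M)))
  | 0, 1 =>
    [(∅, none)]
  | 1, 1 =>
    [(∅, some {0}), ({0}, none)]
  | 2, 1 =>
    [({0}, some {0,1}), ({1}, some {0,1}), ({0,1}, none), (∅, none)]
  | 3, 1 =>
    [({2}, some {0,2}), ({0,2}, some ∅), (∅, some {0,1,2}), ({0,1,2}, none), ({0,1}, some {0}),
     ({0}, none), ({1,2}, some {1}), ({1}, none)]
  | 4, 1 =>
    [({0}, some ∅), (∅, some {1,2}), ({1,2}, some {0,1,3}), ({0,1,3}, none), ({2}, some {0,2}),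
     ({0,2}, some {0,3}), ({0,3}, some {0,1,2}), ({0,1,2}, none), ({1}, some {1,3}),
     ({1,3}, some {0,1}), ({0,1}, some {0,2,3}), ({0,2,3}, none), ({2,3}, some {3}),
     ({3}, some {1,2,3}), ({0,1,2,3}, some {1,2,3}), ({1,2,3}, none)]
  | 5, 1 =>
    [({0,4}, some {0,3,4}), ({0,3,4}, some {0,2,4}), ({0,2,4}, some {1,2,3,4}),
     ({1,2,3,4}, some ∅), (∅, some {0,1,2,3,4}), ({0,1,2,3,4}, none), ({2,3}, some {2}),
     ({2}, some {2,3,4}), ({2,3,4}, some {1,3}), ({1,3}, some {0,2,3,4}), ({0,2,3,4}, none),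
     ({0,3}, some {0,1,3}), ({0,1,3}, some {1,3,4}), ({1,3,4}, some {2,4}),
     ({2,4}, some {0,1,3,4}), ({0,1,3,4}, none), ({0,2}, some {0}), ({0}, some {1}),
     ({1}, some {0,1,2,4}), ({1,2,4}, some {0,1,2,4}), ({0,1,2,4}, none), ({0,1,2}, some {0,1}),
     ({0,1}, some {1,4}), ({1,4}, some {1,2,3}), ({1,2,3}, none), ({0,2,3}, some {0,1,2,3}),
     ({0,1,2,3}, some {1,2}), ({1,2}, some {0,1,4}), ({0,1,4}, none), ({4}, some {3,4}),
     ({3}, some {3,4}), ({3,4}, none)]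
  | 5, 2 =>
    [({1}, some {0,1}), ({0,1}, some ∅), (∅, some {0,1,4}), ({0,1,4}, some {3}),
     ({3}, some {0,1,2,4}), ({0,1,2,4}, none), ({4}, some {2,4}), ({2,4}, some {2,3}),
     ({2,3}, some {1,3,4}), ({1,3,4}, some {2}), ({2}, some {0,1,3,4}), ({0,1,3,4}, none),
     ({0,2,4}, some {0,4}), ({0,4}, some {3,4}), ({3,4}, some {1,2,4}), ({1,2,4}, some {0}),
     ({0}, some {1,2,3,4}), ({1,2,3,4}, none), ({0,2,3}, some {0,3}), ({0,3}, some {0,2}),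
     ({0,2}, some {1,2,3}), ({1,2,3}, some {0,3,4}), ({0,3,4}, none), ({0,1,3}, some {1,3}),
     ({1,3}, some {1,4}), ({1,4}, some {2,3,4}), ({2,3,4}, some {0,1,2}), ({0,1,2}, none),
     ({0,1,2,3}, some {0,1,2,3,4}), ({0,2,3,4}, some {0,1,2,3,4}), ({0,1,2,3,4}, some {1,2}),
     ({1,2}, none)]
  | 5, 3 =>
    [({3}, some ∅), (∅, some {2,4}), ({2,4}, some {0,1,4}), ({0,1,4}, some {2}),
     ({2}, some {0,1,3,4}), ({0,1,3}, some {0,1,3,4}), ({0,1,3,4}, none), ({0,4}, some {0}),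
     ({0}, some {1}), ({1}, some {2,3}), ({2,3}, some {0,1,2,4}), ({0,3,4}, some {0,2,3,4}),
     ({0,2,3,4}, some {0,1,2,4}), ({0,1,2,4}, none), ({0,1,2,3}, some {1,2,3}),
     ({1,2,3}, some {0,2,3}), ({0,2,3}, some {1,2,3,4}), ({1,2,3,4}, some {0,1}),
     ({0,1}, some {2,3,4}), ({2,3,4}, none), ({0,2}, some {0,1,2}), ({0,1,2}, some {0,1,2,3,4}),
     ({0,1,2,3,4}, some {1,2}), ({1,2}, some {0,3}), ({0,3}, some {1,2,4}), ({1,2,4}, none),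
     ({4}, some {3,4}), ({3,4}, some {1,4}), ({1,4}, some {0,2,4}), ({0,2,4}, some {1,3,4}),
     ({1,3}, some {1,3,4}), ({1,3,4}, none)]
  | 5, 4 =>
    [({0,1}, some {1}), ({1}, some {1,3,4}), ({1,3,4}, some {0,2,3,4}), ({0,2,3,4}, some ∅),
     (∅, some {0,1,2,3,4}), ({0}, some {0,3}), ({0,3}, some {0,4}), ({0,4}, some {0,1,2,3,4}),
     ({0,1,2,3,4}, none), ({2,4}, some {4}), ({4}, some {2,3,4}), ({2,3,4}, some {0,2}),
     ({0,2}, some {1,2,3,4}), ({0,1,2,3}, some {0,2,3}), ({0,2,3}, some {0,3,4}),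
     ({0,3,4}, some {1,2,3,4}), ({1,2,3,4}, none), ({0,1,3}, some {1,3}), ({1,3}, some {1,4}),
     ({1,4}, some {0,1,2}), ({0,1,2}, some {3}), ({3}, some {0,1,2,4}), ({0,1,4}, some {0,1,3,4}),
     ({0,1,3,4}, some {0,1,2,4}), ({0,1,2,4}, none), ({2}, some {2,3}), ({2,3}, some {3,4}),
     ({3,4}, some {0,2,4}), ({0,2,4}, some {1,2,3}), ({1,2}, some {1,2,4}),
     ({1,2,4}, some {1,2,3}), ({1,2,3}, none)]
  | 5, 5 =>
    [({0,2,3}, some {2,3}), ({2,3}, some {0,3}), ({0,3}, some {1,3,4}), ({1,3,4}, some {0}),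
     ({0}, some {1,2,3,4}), ({1,2}, some {1,2,3}), ({1,2,3}, some {1}), ({1}, some {1,2,3,4}),
     ({1,2,3,4}, none), ({2,4}, some {4}), ({4}, some {2}), ({2}, some {1,4}),
     ({1,4}, some {0,2,3,4}), ({0,1,2,4}, some {1,2,4}), ({1,2,4}, some {0,1,2}),
     ({0,1,2}, some {1,3}), ({1,3}, some {0,2,3,4}), ({0,2,3,4}, none), ({0,1,3,4}, some {0,1,4}),
     ({0,1,4}, some {0,1,2,3,4}), ({0,1,2,3,4}, some {0,4}), ({0,4}, some {0,1,2,3}),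
     ({2,3,4}, some {3,4}), ({0,3,4}, some {3,4}), ({3}, some {3,4}), ({3,4}, some {0,1,2,3}),
     ({0,1,2,3}, none), ({0,1,3}, some {0,1}), ({0,1}, some ∅), ({0,2,4}, some {0,2}),
     ({0,2}, some ∅), (∅, none)]
  | 5, 6 =>
    [({0,1,4}, some {0,1,2,4}), ({0,1,2,4}, some {0,2}), ({0,2}, some {1,2,4}),
     ({1,2,4}, some {0,3,4}), ({0,3,4}, some {1,2}), ({1,2,3}, some {0,1,2,3}),
     ({0,1,2,3}, some {1,2}), ({1,2}, none), ({1}, some ∅), (∅, some {0,3}), ({0,3}, some {4}),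
     ({4}, some {0,1,2}), ({0,1,2}, some {3,4}), ({1,3,4}, some {1,4}), ({1,4}, some {3,4}),
     ({3,4}, none), ({0,1,2,3,4}, some {1,2,3,4}), ({1,2,3,4}, some {0,2,3,4}),
     ({0,2,3,4}, some {3}), ({3}, some {0,2,4}), ({0,2,4}, some {1,3}), ({0,1,3}, some {0,1,3,4}),
     ({0,1,3,4}, some {1,3}), ({1,3}, none), ({0,4}, some {0}), ({0}, some {0,2,3}),
     ({0,2,3}, some {0,1}), ({0,1}, some {2,3}), ({2}, some {2,4}), ({2,4}, some {2,3}),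
     ({2,3,4}, some {2,3}), ({2,3}, none)]
  | 5, 7 =>
    [({2,4}, some {2,3,4}), ({2,3,4}, some {2}), ({2}, some {0,1,2,3}), ({0,1,2,3}, some ∅),
     (∅, some {0,1,2,3,4}), ({0,2,3}, some {2,3}), ({2,3}, some {1,3}), ({1,3}, some {0}),
     ({0}, some {0,1,2,3,4}), ({1,2,3,4}, some {1,2,4}), ({1,2,4}, some {0,1,2,3,4}),
     ({0,1,2,3,4}, none), ({0,3}, some {0,1,3}), ({0,1,3}, some {1,3,4}), ({1,3,4}, some {1,2}),
     ({1,2}, some {0,4}), ({0,4}, some {1,2,3}), ({0,2,4}, some {0,1,2,4}),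
     ({0,1,2,4}, some {0,2,3,4}), ({0,2,3,4}, some {0,1,4}), ({0,1,4}, some {1,2,3}),
     ({1,2,3}, none), ({3}, some {3,4}), ({3,4}, some {0,1,3,4}), ({0,1,3,4}, some {4}),
     ({4}, some {0,1,2}), ({1}, some {1,4}), ({1,4}, some {0,1}), ({0,1}, some {0,3,4}),
     ({0,3,4}, some {0,1,2}), ({0,2}, some {0,1,2}), ({0,1,2}, none)]
  | 5, 8 =>
    [({0,1,2,3}, some {0,2,3}), ({0,2,3}, some {2}), ({2}, some {0,2,3,4}),
     ({0,2,3,4}, some {0,1}), ({0,1}, some {2,3,4}), ({4}, some {2,4}), ({2,4}, some ∅),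
     (∅, some {0,1,4}), ({0,1,4}, some {2,3,4}), ({3,4}, some {2,3,4}), ({2,3,4}, none),
     ({0,2}, some {0}), ({0}, some {0,1,2}), ({0,1,2}, some {1,2,3,4}), ({1,2,3,4}, some {0,4}),
     ({0,4}, some {1,2,3}), ({1}, some {1,4}), ({1,4}, some {0,1,3,4}), ({0,1,3,4}, some {0,2,4}),
     ({0,2,4}, some {1,2,3}), ({1,2}, some {1,2,3}), ({1,2,3}, none), ({1,3}, some {0,1,3}),
     ({0,1,3}, some {1,3,4}), ({1,3,4}, some {0,3}), ({0,1,2,4}, some {1,2,4}),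
     ({1,2,4}, some {0,1,2,3,4}), ({0,1,2,3,4}, some {0,3}), ({3}, some {2,3}),
     ({2,3}, some {0,3}), ({0,3,4}, some {0,3}), ({0,3}, none)]
  | 5, 9 =>
    [({2,3,4}, some {0,2,3,4}), ({0,2,3,4}, some {0,1,2,3}), ({0,1,2,3}, some {0,1,4}),
     ({0,1,4}, some {2}), ({2}, some {0,1,3,4}), ({2,3}, some {1,2,3}), ({1,2,3}, some {0,2,3}),
     ({0,2,3}, some {2,4}), ({2,4}, some {0,1,3,4}), ({1,3}, some {0,1,3}), ({0,1,3}, some {1}),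
     ({1}, some {0,1,3,4}), ({0,1,3,4}, none), ({3,4}, some {1,3,4}), ({1,3,4}, some {0,3,4}),
     ({0,3,4}, some {0,1}), ({0,1}, some {1,2,3,4}), ({1,2,3,4}, some {0}), ({0,2,4}, some {0,4}),
     ({0,4}, some {0,2}), ({0,2}, some {1,2,4}), ({1,2,4}, some {0}), ({0}, none),
     ({3}, some {0,3}), ({0,3}, some ∅), ({0,1,2}, some {1,2}), ({1,2}, some {0,1,2,4}),
     ({0,1,2,3,4}, some {0,1,2,4}), ({0,1,2,4}, some ∅), ({4}, some {1,4}), ({1,4}, some ∅),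
     (∅, none)]
  | 5, 10 =>
    [({0,4}, some {0,1,4}), ({0,1,4}, some {0,3,4}), ({0,3,4}, some {2,4}),
     ({2,4}, some {0,1,3,4}), ({0,1,3,4}, some {2}), ({1,2,3}, some {2,3}), ({2,3}, some {0,3}),
     ({0,3}, some {1,3,4}), ({1,3,4}, some {2}), ({0,2}, some {2}), ({2}, none),
     ({0,1}, some {0,1,2}), ({0,1,2}, some {1,2,4}), ({1,2,4}, some {1,3}),
     ({1,3}, some {0,1,2,4}), ({0,1,2,4}, some {3}), ({1}, some {1,4}), ({1,4}, some {1,2}),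
     ({1,2}, some {0,2,4}), ({0,2,4}, some {3}), ({3,4}, some {3}), ({3}, none),
     ({0,1,3}, some {0,1,2,3}), ({0,1,2,3}, some {1,2,3,4}), ({1,2,3,4}, some {4}),
     ({4}, some {0,1,2,3,4}), ({0,1,2,3,4}, some ∅), ({0,2,3,4}, some {2,3,4}),
     ({2,3,4}, some {0,2,3}), ({0,2,3}, some ∅), ({0}, some ∅), (∅, none)]
  | 5, 12 =>
    [({0,1}, some {0,1,2}), ({0,1,2}, some {1,2,3}), ({1,2,3}, some {0,1,3,4}),
     ({0,1,3,4}, some ∅), (∅, some {0,1,2,3,4}), ({2}, some {0,2}), ({0,2}, some {0,1,2,4}),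
     ({0,1,2,4}, some {0}), ({0}, some {0,1,2,3,4}), ({1,2,4}, some {2,4}), ({2,4}, some {0,4}),
     ({0,4}, some {1}), ({1}, some {0,1,2,3,4}), ({1,3,4}, some {1,2,3,4}),
     ({1,2,3,4}, some {1,4}), ({1,4}, some {0,1,2,3,4}), ({0,1,2,3,4}, none),
     ({2,3,4}, some {2,3}), ({2,3}, some {1,2}), ({1,2}, some {0,1,4}), ({0,1,4}, some {0,2,3}),
     ({0,2,4}, some {0,2,3,4}), ({0,2,3,4}, some {0,3}), ({0,3}, some {4}), ({4}, some {0,2,3}),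
     ({0,1,3}, some {0,1,2,3}), ({0,1,2,3}, some {1,3}), ({1,3}, some {0,2,3}),
     ({0,3,4}, some {3,4}), ({3}, some {3,4}), ({3,4}, some {0,2,3}), ({0,2,3}, none)]
  | 5, 13 =>
    [({0,3}, some {0,3,4}), ({0,3,4}, some {2,3,4}), ({2,3,4}, some {0,1,2,3}),
     ({0,1,2,3}, some ∅), (∅, some {0,1,2,3,4}), ({2}, some {2,4}), ({2,4}, some {2,3}),
     ({2,3}, some {0}), ({0}, some {0,1,2,3,4}), ({0,2,4}, some {0,4}), ({0,4}, some {0,2}),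
     ({0,2}, some {3}), ({3}, some {0,1,2,3,4}), ({0,1,4}, some {0,1,3,4}),
     ({0,1,3,4}, some {0,2,3,4}), ({0,2,3,4}, some {4}), ({4}, some {0,1,2,3,4}),
     ({0,1,2,3,4}, none), ({1,3,4}, some {1,4}), ({1,4}, some {3,4}), ({3,4}, some {1}),
     ({0,1,2}, some {0,1,2,4}), ({0,1,2,4}, some {0,1}), ({0,1}, some {0,2,3}),
     ({0,2,3}, some {1}), ({1,2,3,4}, some {1,2,4}), ({1,2,4}, some {1}), ({1,3}, some {0,1,3}),
     ({0,1,3}, some {1}), ({1,2}, some {1,2,3}), ({1,2,3}, some {1}), ({1}, none)]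
  | 5, 14 =>
    [({2}, some {0,2}), ({0,2}, some {0,4}), ({0,4}, some {3}), ({3}, some {0,1,2}),
     ({0,1,2}, some {3,4}), ({1,3}, some {1,2,3}), ({1,2,3}, some {0,1,2,3,4}),
     ({0,1,2,3,4}, some {1,2}), ({1,2}, some {3,4}), ({2,4}, some {1,2,4}),
     ({1,2,4}, some {2,3,4}), ({2,3,4}, some {0,1,2,3}), ({0,1,2,3}, some {3,4}),
     ({0,3,4}, some {0,2,3,4}), ({0,2,3,4}, some {3,4}), ({3,4}, none), ({1,2,3,4}, some {1,3,4}),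
     ({1,3,4}, some {0,1,3}), ({0,1,3}, some {2,3}), ({2,3}, some {0,1}),
     ({0,1,2,4}, some {0,2,4}), ({0,2,4}, some {0,2,3}), ({0,2,3}, some {0,1}), ({0}, some {0,3}),
     ({0,3}, some {0,1}), ({1}, some ∅), (∅, some {0,1}), ({4}, some {1,4}), ({1,4}, some {0,1}),
     ({0,1,4}, some {0,1,3,4}), ({0,1,3,4}, some {0,1}), ({0,1}, none)]
  | 5, 15 =>
    [({0,1}, some {1}), ({1}, some {0,1,4}), ({0,1,4}, some {0,2}), ({0,2}, some {0,1,3,4}),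
     ({0,1,3,4}, some {2}), ({4}, some {1,4}), ({1,4}, some {1,2}), ({1,2}, some {0,1,2,3,4}),
     ({0,1,2,3,4}, some {2}), ({1,2,3}, some {1,3}), ({1,3}, some {3,4}), ({3,4}, some {0,1,3}),
     ({0,1,3}, some {2}), ({0,1,2,3}, some {0,1,2}), ({0,1,2}, some {2}), ({2}, none),
     ({0,2,3,4}, some {0,3,4}), ({0,3,4}, some {2,3,4}), ({2,3,4}, some {0,3}),
     ({0,3}, some {0,1,2,4}), ({0,1,2,4}, some {3}), ({0,2,3}, some {2,3}), ({2,3}, some {2,4}),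
     ({2,4}, some {3}), ({1,2,4}, some {1,2,3,4}), ({1,3,4}, some {1,2,3,4}),
     ({1,2,3,4}, some {0,2,4}), ({0,2,4}, some {3}), ({0}, some ∅), (∅, some {0,4}),
     ({0,4}, some {3}), ({3}, none)]
  | 6, 10 =>
    [({5}, some {3,5}), ({3,5}, some {0,5}), ({0,5}, some {2,4,5}), ({2,4,5}, some {0,1,3,4,5}),
     ({0,1,3,4,5}, some {2,4}), ({2,4}, some {0,1,3,5}), ({0}, some {0,3}), ({0,3}, some {2,3}),
     ({2,3}, some {0,2,3,4,5}), ({0,2,3,4,5}, some {1,2,4}), ({1,2,4}, some {0,1,3,5}),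
     ({0,1,2,3,4}, some {0,1,2,3,4,5}), ({0,1,2,3,4,5}, some {0,1,3,5}), ({0,1,3,5}, none),
     ({3,4}, some {2,3,4}), ({2,3,4}, some {3}), ({3}, some {0,1}), ({0,1}, some {1,2,4,5}),
     ({1,2,4,5}, some {0,2,3}), ({0,2,3}, some {1,4,5}), ({1,2,3,5}, some {1,3,5}),
     ({1,3,5}, some {0,1,3}), ({0,1,3}, some {1,4}), ({1,4}, some {0,2,3,4}),
     ({0,2,3,4}, some {1,4,5}), ({0,1,4,5}, some {1,4,5}), ({1,4,5}, none),
     ({0,2,4,5}, some {0,1,2,4,5}), ({0,1,2,4,5}, some {0,1,2,3,5}), ({0,1,2,3,5}, some {0,1,2,4}),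
     ({0,1,2,4}, some {2,5}), ({2,5}, some {0,3,4}), ({0,3,4}, some {1,2,5}),
     ({0,1,3,4}, some {0,1,4}), ({0,1,4}, some {0,4,5}), ({0,4,5}, some {2,3,4,5}),
     ({2,3,4,5}, some {0,4}), ({0,4}, some {1,2,5}), ({0,1,2,5}, some {1,2,5}), ({1,2,5}, none),
     ({0,2,5}, some {0,2}), ({0,2}, some ∅), (∅, some {0,3,5}), ({0,3,5}, some {0,2,4}),
     ({0,2,4}, some {1,5}), ({1,2}, some {1}), ({1}, some {4}), ({4}, some {0,3,4,5}),
     ({0,3,4,5}, some {1,5}), ({3,4,5}, some {4,5}), ({4,5}, some {1,5}), ({1,5}, none),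
     ({0,1,2,3}, some {0,1,2}), ({0,1,2}, some {0,1,5}), ({0,1,5}, some {0,2,3,5}),
     ({0,2,3,5}, some {1,3}), ({1,2,3,4}, some {1,2,3}), ({1,2,3}, some {2}), ({2}, some {1,3}),
     ({1,3,4,5}, some {1,2,3,4,5}), ({1,2,3,4,5}, some {2,3,5}), ({2,3,5}, some {1,3}),
     ({1,3,4}, some {1,3}), ({1,3}, none)]
  | 6, 11 =>
    [({0,5}, some {0,1,5}), ({0,1,5}, some {5}), ({5}, some {1,2}), ({1,2}, some {1,3,4,5}),
     ({1,3,4,5}, some {2}), ({2}, some {0,1,3,4,5}), ({1,5}, some {1,2,5}),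
     ({1,2,5}, some {1,3,5}), ({1,3,5}, some {1,2,3,4}), ({1,2,3,4}, some {0,2}),
     ({0,2}, some {0,1,3,4,5}), ({0}, some {0,4}), ({0,4}, some {0,1,3,4}),
     ({0,1,3,4}, some {2,3,4}), ({2,3,4}, some {0,1,3,4,5}), ({0,1,3,4,5}, none),
     ({2,3,4,5}, some {2,3,5}), ({2,3,5}, some {3,4,5}), ({3,4,5}, some {1,2,3,5}),
     ({1,2,3,5}, some {4,5}), ({4,5}, some {0,1,2,3,4}), ({0,1}, some {0,1,3}),
     ({0,1,3}, some {1,3,4}), ({1,3,4}, some {0,1,2,3}), ({0,1,2,3}, some {3,5}),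
     ({3,5}, some {0,1,2,3,4}), ({0,1,4,5}, some {1,4,5}), ({1,4,5}, some {1,2,4}),
     ({1,2,4}, some {0,2,4,5}), ({0,2,4,5}, some ∅), (∅, some {0,1,2,3,4}), ({0,1,2,3,4}, none),
     ({0,3}, some {0,3,4}), ({0,3,4}, some {0,4,5}), ({0,4,5}, some {3,4}),
     ({3,4}, some {0,2,3,5}), ({0,2,3,5}, some {4}), ({4}, some {0,1,2,3,5}),
     ({0,1,3,5}, some {0,3,5}), ({0,3,5}, some {3}), ({3}, some {0,3,4,5}),
     ({0,3,4,5}, some {2,4}), ({2,4}, some {0,1,2,3,5}), ({0,1,2,4,5}, some {0,1,2,5}),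
     ({0,1,2,5}, some {2,5}), ({2,5}, some {0,2,4}), ({0,2,4}, some {0,1,2,3,5}),
     ({0,1,2,3,5}, none), ({2,4,5}, some {1,2,4,5}), ({1,2,4,5}, some {0,1,2,3,4,5}),
     ({0,1,2,3,4,5}, some {0,1,4}), ({0,1,4}, some {1,2,3,4,5}), ({1}, some {1,4}),
     ({1,4}, some {0,1,2,4}), ({0,1,2,4}, some {0,2,5}), ({0,2,5}, some {1,2,3,4,5}),
     ({1,2,3}, some {2,3}), ({2,3}, some {1,3}), ({1,3}, some {1,2,3,4,5}),
     ({0,2,3,4,5}, some {0,2,3,4}), ({0,2,3}, some {0,2,3,4}), ({0,2,3,4}, some {0,1,2}),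
     ({0,1,2}, some {1,2,3,4,5}), ({1,2,3,4,5}, none)]
  | _, _ => []

lemma replay_gatherMoves_one :
    ∀ m ∈ range 6, replay 1 (gatherMoves m 1) (fun _ => 1) = true := by
  decide

lemma replay_gatherMoves_five :
    ∀ j ∈ Icc 1 15, j ≠ 11 → replay j (gatherMoves 5 j) (fun _ => 1) = true := by
  decide

set_option maxRecDepth 4000 in
lemma replay_gatherMoves_six :
    ∀ j ∈ Icc 10 11, replay j (gatherMoves 6 j) (fun _ => 1) = true := by
  decide

variable {j m : ℕ}

lemma subcubeGatherable_one_of_lt_six (hm : m < 6) : SubcubeGatherable 1 m :=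
  subcubeGatherable_of_replay le_rfl (replay_gatherMoves_one m (mem_range.mpr hm))

lemma subcubeGatherable_five (hj : j ∈ Icc 1 15) (h11 : j ≠ 11) : SubcubeGatherable j 5 :=
  subcubeGatherable_of_replay (mem_Icc.mp hj).1 (replay_gatherMoves_five j hj h11)

lemma subcubeGatherable_six (hj : j ∈ Icc 1 14) : SubcubeGatherable j 6 := by
  rw [mem_Icc] at hj
  by_cases h : j ∈ Icc 10 11
  · exact subcubeGatherable_of_replay hj.1 (replay_gatherMoves_six j h)
  · rw [mem_Icc] at h
    exact (subcubeGatherable_five (by simp; omega) (by omega)).succ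
      (subcubeGatherable_five (by simp; omega) (by omega))

lemma subcubeGatherable_of_add_le (hj : 1 ≤ j) (hm : 6 ≤ m) (h : j + m ≤ 20) :
    SubcubeGatherable j m := by
  induction m, hm using Nat.le_induction generalizing j with
  | base => exact subcubeGatherable_six (by simp; omega)
  | succ m hm ih => exact (ih hj (by omega)).succ (ih (by omega) (by omega))

lemma subcubeGatherable_one (hm : m < 20) : SubcubeGatherable 1 m := by
  rcases lt_or_ge m 6 with h | h
  · exact subcubeGatherable_one_of_lt_six h
  · exact subcubeGatherable_of_add_le le_rfl h (by omega)

lemma canGather_univ_erase {d : ℕ} (h : ∀ m < d, SubcubeGatherable 1 m) (r : Finset (Fin d)) :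
    CanGather (cubeGraph d) (univ.erase r) r := by
  suffices ∀ U : Finset (Fin d), CanGather (cubeGraph d) ((subcube r ∅ U).erase r) r by
    have hU : subcube r ∅ univ = univ := by ext; simp
    simpa [hU] using this univ
  intro U
  induction U using Finset.induction_on with
  | empty =>
    rw [show (subcube r ∅ ∅).erase r = ∅ by ext; simp [subset_empty, and_comm]]
    exact canGather_empty
  | @insert a U ha ih =>
    have hU : #U < d := by
      simpa [card_insert_of_notMem ha] using card_le_univ (insert a U)
    have hQ := h #U hU r (singleton_subset_iff.mpr (mem_insert_self a U)) (card_singleton a)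
      (by rw [insert_sdiff_of_mem _ (mem_singleton_self a), sdiff_singleton_eq_erase,
        erase_eq_of_notMem ha])
    have hdisj := disjoint_subcube_erase_insert (r := r) (T := ∅) (U := insert a U) a
    rw [erase_insert ha, insert_empty] at hdisj
    rw [subcube_eq_union a, erase_insert ha, insert_empty, erase_union_distrib,
      erase_eq_of_notMem hQ.1]
    exact ih.union (hdisj.mono_left (erase_subset _ _)) hQ

theorem isStackable_cubeGraph {d : ℕ} (h : ∀ m < d, SubcubeGatherable 1 m) :
    IsStackable (cubeGraph d) :=
  fun r => isStackableAt_of_canGather (canGather_univ_erase h r)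

end CupStacking

theorem cube_stackable_le_twenty_general (d : ℕ) (hd2 : d ≤ 20) :
    IsStackable (cubeGraph d) :=
  CupStacking.isStackable_cubeGraph fun _ hm => CupStacking.subcubeGatherable_one (by omega)

theorem cube_stackable_le_twenty (d : ℕ) (hd1 : 1 ≤ d) (hd2 : d ≤ 20) :
    IsStackable (cubeGraph d) :=
  cube_stackable_le_twenty_general d hd2
end

section
/- Let G be a finite connected simple graph and r a vertex of eccentricity 2 (max over vertices v of dist_G(r,v) equals 2). Then G is r-stackable if and only if G has a matching that saturates N_2(r), i.e. there is a set M of pairwise vertex-disjoint edges of G such that every vertex at distance exactly 2 from r is an endpoint of some edge of M. -/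
/-!
When every vertex is within distance 2 of `r`, a stack of three or more cups away from `r`
can never be moved onto `r`. So in a successful stacking, the first move touching a vertex of
`N₂(r)` merges two single cups along an edge, and such merges form a matching saturating
`N₂(r)`. Conversely, given such a matching, each vertex of `N₂(r)` takes the cup of its
partner and jumps to `r` with both cups; what is left are neighbours of `r`, which move to `r`
one at a time.
-/

open SimpleGraph Finset

section

variable {V : Type*} {G : SimpleGraph V} {r : V}

lemma ne_of_dist_eq_two_of_adj {v w : V} (hv : G.dist r v = 2) (hvw : G.Adj v w) : w ≠ r := by
  rintro rfl
  rw [dist_comm, dist_eq_one_iff_adj.mpr hvw] at hv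
  omega

def HasHighStack (r : V) (C : V → ℕ) : Prop :=
  ∃ v, v ≠ r ∧ 3 ≤ C v

lemma eq_one_of_not_hasHighStack {C C' : V → ℕ} {u w : V} (hu : 1 ≤ C u)
    (hw : 1 ≤ C w) (hC'w : C' w = C u + C w) (hwr : w ≠ r) (hlow : ¬ HasHighStack r C') :
    C u = 1 ∧ C w = 1 := by
  have : C' w < 3 := by
    by_contra! h
    exact hlow ⟨w, hwr, h⟩
  omega

def HasSingletonMatching (G : SimpleGraph V) (r : V) (C : V → ℕ) : Prop :=
  ∃ M : G.Subgraph, M.IsMatching ∧ (∀ x ∈ M.verts, C x = 1) ∧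
    ∀ v, G.dist r v = 2 → C v = 1 → v ∈ M.verts

variable [DecidableEq V]

lemma cupMove_iff {C C' : V → ℕ} :
    CupMove G C C' ↔ ∃ u w, u ≠ w ∧ 1 ≤ C u ∧ 1 ≤ C w ∧ G.dist u w = C u ∧
      C' u = 0 ∧ C' w = C u + C w ∧ ∀ x, x ≠ u → x ≠ w → C' x = C x := by
  constructor
  · rintro ⟨u, w, huw, hu, hw, hd, hC'⟩
    refine ⟨u, w, huw, hu, hw, hd, by simp [hC'], by simp [hC', huw.symm], ?_⟩
    intro x hxu hxw
    simp [hC', hxu, hxw]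
  · rintro ⟨u, w, huw, hu, hw, hd, hC'u, hC'w, hC'⟩
    refine ⟨u, w, huw, hu, hw, hd, fun x => ?_⟩
    by_cases hxu : x = u
    · simp [hxu, hC'u]
    by_cases hxw : x = w
    · simp [hxw, hC'w, huw.symm]
    simp [hxu, hxw, hC' x hxu hxw]

-- A stack of `k ≥ 3` cups off `r` moves a distance `k`, beyond the eccentricity of `r`,
-- so it lands on a vertex other than `r` and stays high.
lemma CupMove.hasHighStack (hecc : ∀ v, G.dist r v ≤ 2) {C C' : V → ℕ}
    (h : CupMove G C C') (hC : HasHighStack r C) : HasHighStack r C' := by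
  obtain ⟨u, w, -, -, -, hd, -, hC'w, hC'⟩ := cupMove_iff.mp h
  obtain ⟨v, hvr, hv⟩ := hC
  by_cases hvu : v = u
  · subst hvu
    refine ⟨w, ?_, by omega⟩
    rintro rfl
    have := hecc v
    rw [dist_comm] at hd
    omega
  by_cases hvw : v = w
  · exact ⟨v, hvr, by subst hvw; omega⟩
  · exact ⟨v, hvr, by rw [hC' v hvu hvw]; exact hv⟩

lemma CupMove.hasSingletonMatching {C C' : V → ℕ} (h : CupMove G C C')
    (hlow : ¬ HasHighStack r C') (hM' : HasSingletonMatching G r C') :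
    HasSingletonMatching G r C := by
  obtain ⟨u, w, huw, hu, hw, hd, hC'u, hC'w, hC'⟩ := cupMove_iff.mp h
  obtain ⟨M', hM', hM'one, hM'sat⟩ := hM'
  have hu' : u ∉ M'.verts := fun hx => by simpa [hC'u] using hM'one u hx
  have hw' : w ∉ M'.verts := fun hx => by have := hM'one w hx; omega
  have hM'C : ∀ x ∈ M'.verts, C x = 1 := fun x hx => by
    rw [← hC' x (ne_of_mem_of_not_mem hx hu') (ne_of_mem_of_not_mem hx hw')]
    exact hM'one x hx
  by_cases hsingle : C u = 1 ∧ C w = 1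
  · -- the edge of this merge joins the matching
    have hadj : G.Adj u w := dist_eq_one_iff_adj.mp (hd.trans hsingle.1)
    refine ⟨M' ⊔ G.subgraphOfAdj hadj, hM'.sup (.subgraphOfAdj hadj) ?_, ?_, ?_⟩
    · rw [hM'.support_eq_verts, (Subgraph.IsMatching.subgraphOfAdj hadj).support_eq_verts,
        subgraphOfAdj_verts, Set.disjoint_insert_right, Set.disjoint_singleton_right]
      exact ⟨hu', hw'⟩
    · rintro x (hx | hx)
      · exact hM'C x hx
      · rcases hx with rfl | rfl
        exacts [hsingle.1, hsingle.2]
    · intro v hv hCv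
      by_cases hvuw : v = u ∨ v = w
      · exact Or.inr hvuw
      obtain ⟨hvu, hvw⟩ := not_or.mp hvuw
      exact Or.inl (hM'sat v hv (by rw [hC' v hvu hvw, hCv]))
  · -- a single cup of `N₂(r)` taking part in the move would make it a merge of two single cups
    refine ⟨M', hM', hM'C, fun v hv hCv => hM'sat v hv ?_⟩
    have hvu : v ≠ u := by
      rintro rfl
      have hwr := ne_of_dist_eq_two_of_adj hv (dist_eq_one_iff_adj.mp (hd.trans hCv))
      exact hsingle (eq_one_of_not_hasHighStack hu hw hC'w hwr hlow)
    have hvw : v ≠ w := by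
      rintro rfl
      have hvr : v ≠ r := by rintro rfl; simp at hv
      exact hsingle (eq_one_of_not_hasHighStack hu hw hC'w hvr hlow)
    rw [hC' v hvu hvw, hCv]

lemma hasSingletonMatching_of_reflTransGen (hecc : ∀ v, G.dist r v ≤ 2) {C D : V → ℕ}
    (h : Relation.ReflTransGen (CupMove G) C D) (hD : ∀ v, v ≠ r → D v = 0) :
    HasSingletonMatching G r C := by
  suffices ¬ HasHighStack r C ∧ HasSingletonMatching G r C from this.2
  induction h using Relation.ReflTransGen.head_induction_on with
  | refl =>
    refine ⟨fun ⟨v, hvr, hv⟩ => by simp [hD v hvr] at hv, ⊥, fun v hv => by simp at hv,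
      by simp, fun v hv hDv => ?_⟩
    have hvr : v ≠ r := by rintro rfl; simp at hv
    simp [hD v hvr] at hDv
  | head hmove _ ih =>
    exact ⟨fun hC => ih.1 (hmove.hasHighStack hecc hC), hmove.hasSingletonMatching ih.1 ih.2⟩

lemma SimpleGraph.Subgraph.IsMatching.exists_adj_mem_erase_erase {M : G.Subgraph}
    (hM : M.IsMatching) {P : V → Prop} {T : Finset V} (hT : ∀ v ∈ T, P v → ∃ z ∈ T, M.Adj v z)
    {v z : V} (hvz : M.Adj v z) :
    ∀ x ∈ (T.erase z).erase v, P x → ∃ y ∈ (T.erase z).erase v, M.Adj x y := by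
  intro x hx hPx
  simp only [mem_erase] at hx
  obtain ⟨hxv, hxz, hxT⟩ := hx
  obtain ⟨y, hyT, hxy⟩ := hT x hxT hPx
  refine ⟨y, mem_erase.mpr ⟨?_, mem_erase.mpr ⟨?_, hyT⟩⟩, hxy⟩
  · rintro rfl
    exact hxz (hM.eq_of_adj_left hxy.symm hvz)
  · rintro rfl
    exact hxv (hM.eq_of_adj_right hxy hvz)

def pileWithSingles (r : V) (m : ℕ) (T : Finset V) : V → ℕ :=
  fun v => if v = r then m else if v ∈ T then 1 else 0

lemma cupMove_pileWithSingles_erase {m : ℕ} {T : Finset V} {v : V} (hm : 1 ≤ m) (hv : v ∈ T)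
    (hvr : G.Adj v r) :
    CupMove G (pileWithSingles r m T) (pileWithSingles r (m + 1) (T.erase v)) := by
  have hvr' : v ≠ r := hvr.ne
  refine cupMove_iff.mpr ⟨v, r, hvr', ?_, ?_, ?_, ?_, ?_, fun x hxv hxr => ?_⟩ <;>
    simp_all [pileWithSingles, dist_eq_one_iff_adj]
  omega

lemma reflTransGen_pileWithSingles_erase_erase {m : ℕ} {T : Finset V} {v z : V} (hm : 1 ≤ m)
    (hr : r ∉ T) (hv : v ∈ T) (hz : z ∈ T) (hzv : G.Adj z v) (hvr : G.dist v r = 2) :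
    Relation.ReflTransGen (CupMove G) (pileWithSingles r m T)
      (pileWithSingles r (m + 2) ((T.erase z).erase v)) := by
  have hvr' : v ≠ r := by rintro rfl; simp at hvr
  have hzr : z ≠ r := fun h => hr (h ▸ hz)
  have hzv' : z ≠ v := hzv.ne
  have merge : CupMove G (pileWithSingles r m T)
      (Function.update (pileWithSingles r m (T.erase z)) v 2) := by
    refine cupMove_iff.mpr ⟨z, v, hzv', ?_, ?_, ?_, ?_, ?_, fun x hxz hxv => ?_⟩ <;>
      simp_all [pileWithSingles, dist_eq_one_iff_adj]
  have toRoot : CupMove G (Function.update (pileWithSingles r m (T.erase z)) v 2)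
      (pileWithSingles r (m + 2) ((T.erase z).erase v)) := by
    refine cupMove_iff.mpr ⟨v, r, hvr', ?_, ?_, ?_, ?_, ?_, fun x hxv hxr => ?_⟩ <;>
      simp_all [pileWithSingles, hvr'.symm]
    omega
  exact .head merge (.single toRoot)

-- Clear `N₂(r)` pair by pair along the matching, then the neighbours of `r` one by one.
lemma reflTransGen_pileWithSingles_empty (hG : G.Connected) (hecc : ∀ v, G.dist r v ≤ 2)
    {M : G.Subgraph} (hM : M.IsMatching) (T : Finset V) (m : ℕ) (hm : 1 ≤ m) (hr : r ∉ T)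
    (hT : ∀ v ∈ T, G.dist r v = 2 → ∃ z ∈ T, M.Adj v z) :
    Relation.ReflTransGen (CupMove G) (pileWithSingles r m T) (pileWithSingles r (m + #T) ∅) := by
  induction T using Finset.strongInduction generalizing m with
  | H T ih =>
  by_cases hfar : ∃ v ∈ T, G.dist r v = 2
  · obtain ⟨v, hv, hv2⟩ := hfar
    obtain ⟨z, hz, hvz⟩ := hT v hv hv2
    have hzv : z ≠ v := (M.adj_sub hvz).ne'
    have hcard : m + #T = m + 2 + #((T.erase z).erase v) := by
      rw [← card_erase_add_one hz, ← card_erase_add_one (mem_erase.mpr ⟨hzv.symm, hv⟩)]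
      omega
    have hsub : (T.erase z).erase v ⊂ T :=
      (erase_ssubset (mem_erase.mpr ⟨hzv.symm, hv⟩)).trans_le (erase_subset z T)
    refine .trans (reflTransGen_pileWithSingles_erase_erase hm hr hv hz (M.adj_sub hvz).symm
      (dist_comm.trans hv2)) ?_
    rw [hcard]
    exact ih _ hsub (m + 2) (by omega) (fun h => hr (mem_of_mem_erase (mem_of_mem_erase h)))
      (hM.exists_adj_mem_erase_erase hT hvz)
  obtain rfl | ⟨v, hv⟩ := T.eq_empty_or_nonempty
  · exact .refl
  have hvr : v ≠ r := fun h => hr (h ▸ hv)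
  have hv1 : G.dist r v = 1 := by
    have := hG.pos_dist_of_ne hvr.symm
    have := hecc v
    have : G.dist r v ≠ 2 := fun h => hfar ⟨v, hv, h⟩
    omega
  have hadj : G.Adj v r := (dist_eq_one_iff_adj.mp hv1).symm
  refine .head (cupMove_pileWithSingles_erase hm hv hadj) ?_
  have hcard : m + #T = m + 1 + #(T.erase v) := by
    rw [← card_erase_add_one hv]
    omega
  rw [hcard]
  exact ih _ (erase_ssubset hv) (m + 1) (by omega) (fun h => hr (mem_of_mem_erase h))
    (fun x hx hx2 => absurd ⟨x, mem_of_mem_erase hx, hx2⟩ hfar)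

end

theorem ecc_two_stackable_iff_matching_general {V : Type*} [Fintype V] [DecidableEq V]
    (G : SimpleGraph V) (hG : G.Connected) (r : V)
    (hecc_le : ∀ v : V, G.dist r v ≤ 2) :
    IsStackableAt G r ↔
      ∃ M : G.Subgraph, M.IsMatching ∧ {v : V | G.dist r v = 2} ⊆ M.verts := by
  constructor
  · intro h
    obtain ⟨M, hM, -, hsat⟩ :=
      hasSingletonMatching_of_reflTransGen hecc_le h fun v hv => if_neg hv
    exact ⟨M, hM, fun v hv => hsat v hv rfl⟩
  · rintro ⟨M, hM, hsat⟩
    have hpartner : ∀ v ∈ univ.erase r, G.dist r v = 2 → ∃ z ∈ univ.erase r, M.Adj v z := by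
      intro v _ hv
      obtain ⟨z, hvz, -⟩ := hM (hsat hv)
      exact ⟨z, mem_erase.mpr ⟨ne_of_dist_eq_two_of_adj hv (M.adj_sub hvz), mem_univ z⟩, hvz⟩
    have hstack := reflTransGen_pileWithSingles_empty hG hecc_le hM (univ.erase r) 1 le_rfl
      (notMem_erase r univ) hpartner
    rw [add_comm, card_erase_add_one (mem_univ r)] at hstack
    unfold IsStackableAt IsStackableConf
    convert hstack using 1
    · ext v
      by_cases hv : v = r <;> simp [pileWithSingles, hv]
    · ext v
      simp [pileWithSingles]

theorem ecc_two_stackable_iff_matching {V : Type*} [Fintype V] [DecidableEq V]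
    (G : SimpleGraph V) (hG : G.Connected) (r : V)
    (hecc_le : ∀ v : V, G.dist r v ≤ 2) (hecc_eq : ∃ v : V, G.dist r v = 2) :
    IsStackableAt G r ↔
      ∃ M : G.Subgraph, M.IsMatching ∧ {v : V | G.dist r v = 2} ⊆ M.verts :=
  ecc_two_stackable_iff_matching_general G hG r hecc_le
end

section
/- Let G = K_{a_1,…,a_t} be the complete t-partite graph on n vertices with t ≥ 2 and nonempty parts A_1, …, A_t of sizes a_1, …, a_t (two vertices are adjacent iff they lie in different parts), and let r be a vertex in part A_i. Then G is r-stackable if and only if 2·a_i ≤ n + 1. Consequently, G is stackable if and only if 2·a_i ≤ n + 1 for every i. -/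
/-!
A move in a complete multipartite graph either sends a single cup to another part or a pile of
exactly two cups within its part, since all distances are at most 2. Fix the part `A` of `r` and
give a vertex of `A` holding `c` cups the weight `2c - c % 2`, and an occupied vertex outside `A`
the weight 3. No move increases the total weight, which is `3n - 2|A|` at the start and
`2n - n % 2` at the end; hence `2|A| ≤ n + 1`. Conversely, if `|A| - 1 ≤ n - |A|`, match every
vertex `u ≠ r` of `A` with its own vertex `w` outside `A`: move `w` onto `u`, then the two cups
of `u` onto `r`; finally move the remaining cups outside `A` onto `r` one at a time.
-/

open SimpleGraph Finset

section CupMoves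

variable {V : Type*} [Fintype V] [DecidableEq V] {G : SimpleGraph V}

lemma sum_add_eq_of_pile_moved {M : Type*} [AddCommMonoid M] {C C' : V → ℕ} {u v : V}
    (huv : u ≠ v) (hC' : ∀ w, C' w = if w = u then 0 else if w = v then C u + C v else C w)
    (f : V → ℕ → M) :
    ∑ w, f w (C' w) + (f u (C u) + f v (C v)) =
      ∑ w, f w (C w) + (f u 0 + f v (C u + C v)) := by
  have hrest : ∑ w ∈ {u, v}ᶜ, f w (C' w) = ∑ w ∈ {u, v}ᶜ, f w (C w) :=
    sum_congr rfl fun w hw => by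
      simp only [mem_compl, mem_insert, mem_singleton, not_or] at hw
      rw [hC' w, if_neg hw.1, if_neg hw.2]
  rw [← sum_add_sum_compl {u, v}, ← sum_add_sum_compl {u, v} (fun w => f w (C w)),
    sum_pair huv, sum_pair huv, hrest, hC' u, hC' v, if_pos rfl, if_neg huv.symm, if_pos rfl]
  abel

lemma CupMove.sum_eq_s10 {C C' : V → ℕ} (h : CupMove G C C') : ∑ w, C' w = ∑ w, C w := by
  obtain ⟨u, v, huv, -, -, -, hC'⟩ := h
  have := sum_add_eq_of_pile_moved huv hC' fun _ c => c
  omega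

lemma CupMove.sum_le {C C' : V → ℕ} (h : CupMove G C C') (f : V → ℕ → ℕ)
    (hf : ∀ u v, 1 ≤ C u → 1 ≤ C v → G.dist u v = C u →
      f u 0 + f v (C u + C v) ≤ f u (C u) + f v (C v)) :
    ∑ w, f w (C' w) ≤ ∑ w, f w (C w) := by
  obtain ⟨u, v, huv, hu, hv, hd, hC'⟩ := h
  have := sum_add_eq_of_pile_moved huv hC' f
  have := hf u v hu hv hd
  omega

lemma sum_eq_of_reflTransGen_cupMove {C D : V → ℕ} (h : Relation.ReflTransGen (CupMove G) C D) :
    ∑ w, D w = ∑ w, C w := by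
  induction h with
  | refl => rfl
  | tail _ hmove ih => exact hmove.sum_eq_s10.trans ih

lemma IsStackableConf.of_reflTransGen {C D : V → ℕ} {r : V}
    (h : Relation.ReflTransGen (CupMove G) C D) (hD : ∀ w, w ≠ r → D w = 0) :
    IsStackableConf G C r := by
  have hDr : D r = ∑ w, C w := by
    rw [← sum_eq_of_reflTransGen_cupMove h, Fintype.sum_eq_single r hD]
  have hD' : D = fun w => if w = r then ∑ v, C v else 0 := by
    funext w
    split_ifs with hw
    · rw [hw, hDr]
    · rw [hD w hw]
  unfold IsStackableConf
  rwa [← hD']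

end CupMoves

namespace SimpleGraph

variable {V : Type*} {G : SimpleGraph V} {u v w : V}

lemma dist_eq_two_of_adj_of_adj (hwu : G.Adj w u) (hwv : G.Adj w v) (huv : u ≠ v)
    (hnadj : ¬G.Adj u v) : G.dist u v = 2 := by
  rw [SimpleGraph.dist, edist_eq_two_iff.mpr ⟨huv, hnadj, w, hwu.symm, hwv.symm⟩]
  rfl

end SimpleGraph

section Tower

variable {V : Type*} [DecidableEq V] {G : SimpleGraph V}

def tower (r : V) (k : ℕ) (S : Finset V) : V → ℕ :=
  fun x => if x = r then k else if x ∈ S then 1 else 0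

variable {r u w : V} {k : ℕ} {S : Finset V}

lemma cupMove_tower_erase (hwr : G.Adj w r) (hw : w ∈ S) (hk : 1 ≤ k) :
    CupMove G (tower r k S) (tower r (k + 1) (S.erase w)) := by
  have hw₁ : tower r k S w = 1 := by simp [tower, hwr.ne, hw]
  refine ⟨w, r, hwr.ne, hw₁.ge, by simpa [tower], ?_, fun x => ?_⟩
  · rw [hw₁, dist_eq_one_iff_adj]
    exact hwr
  · by_cases hxw : x = w
    · simp [tower, hxw, hwr.ne]
    · simp only [tower, hxw, hwr.ne, hw, mem_erase]
      split_ifs <;> first | omega | simp_all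

lemma reflTransGen_tower_erase_erase (hwu : G.Adj w u) (hwr : G.Adj w r) (hur : u ≠ r)
    (hnadj : ¬G.Adj u r) (hw : w ∈ S) (hu : u ∈ S) (hk : 1 ≤ k) :
    Relation.ReflTransGen (CupMove G) (tower r k S) (tower r (k + 2) ((S.erase w).erase u)) := by
  set D := Function.update (tower r k (S.erase w)) u 2 with hD
  have hDu : D u = 2 := by simp [hD]
  have hDr : D r = k := by simp [hD, hur.symm, tower]
  have hw₁ : tower r k S w = 1 := by simp [tower, hwr.ne, hw]
  have hmove₁ : CupMove G (tower r k S) D := by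
    refine ⟨w, u, hwu.ne, hw₁.ge, by simp [tower, hur, hu], ?_, fun x => ?_⟩
    · rw [hw₁, dist_eq_one_iff_adj]
      exact hwu
    · simp only [hD, Function.update, tower, mem_erase]
      split_ifs <;> first | omega | simp_all
  have hmove₂ : CupMove G D (tower r (k + 2) ((S.erase w).erase u)) := by
    refine ⟨u, r, hur, by omega, by omega, ?_, fun x => ?_⟩
    · rw [hDu, dist_eq_two_of_adj_of_adj hwu hwr hur hnadj]
    · simp only [hD, Function.update, tower, mem_erase]
      split_ifs <;> first | omega | simp_all
  exact .head hmove₁ (.single hmove₂)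

lemma reflTransGen_tower_of_forall_adj {O : Finset V} (hO : ∀ w ∈ O, G.Adj w r)
    (hk : 1 ≤ k) : Relation.ReflTransGen (CupMove G) (tower r k O) (tower r (k + #O) ∅) := by
  induction O using Finset.induction_on generalizing k with
  | empty => rfl
  | insert w O hwO ih =>
    have hmove := cupMove_tower_erase (hO w (mem_insert_self w O)) (mem_insert_self w O) hk
    rw [erase_insert hwO] at hmove
    have hrest := ih (fun x hx => hO x (mem_insert_of_mem hx)) (k := k + 1) (by omega)
    rw [card_insert_of_notMem hwO, ← add_assoc, add_right_comm]
    exact .head hmove hrest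

lemma reflTransGen_tower_of_card_le {I O : Finset V} (hI : ∀ u ∈ I, u ≠ r ∧ ¬G.Adj u r)
    (hIO : ∀ u ∈ I, ∀ w ∈ O, G.Adj w u) (hO : ∀ w ∈ O, G.Adj w r) (hcard : #I ≤ #O)
    (hk : 1 ≤ k) :
    Relation.ReflTransGen (CupMove G) (tower r k (I ∪ O)) (tower r (k + #I + #O) ∅) := by
  induction I using Finset.induction_on generalizing O k with
  | empty => simpa using reflTransGen_tower_of_forall_adj hO hk
  | insert u I huI ih =>
    rw [card_insert_of_notMem huI] at hcard ⊢
    obtain ⟨w, hw⟩ : O.Nonempty := card_pos.mp (by omega)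
    have hu := mem_insert_self u I
    have hpair := reflTransGen_tower_erase_erase (S := insert u I ∪ O) (hIO u hu w hw) (hO w hw)
      (hI u hu).1 (hI u hu).2 (mem_union_right _ hw) (mem_union_left _ hu) hk
    have hS : ((insert u I ∪ O).erase w).erase u = I ∪ O.erase w := by
      have huO : u ∉ O := fun h => (hIO u hu u h).ne rfl
      have hwI : w ∉ I := fun h => (hIO w (mem_insert_of_mem h) w hw).ne rfl
      ext x
      simp only [mem_erase, mem_union, mem_insert]
      grind
    have hrest := ih (fun x hx => hI x (mem_insert_of_mem hx))
      (fun x hx y hy => hIO x (mem_insert_of_mem hx) y (mem_of_mem_erase hy))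
      (fun y hy => hO y (mem_of_mem_erase hy)) (by rw [card_erase_of_mem hw]; omega)
      (k := k + 2) (by omega)
    rw [hS] at hpair
    have hO' : #(O.erase w) + 1 = #O := card_erase_add_one hw
    convert hpair.trans hrest using 2
    omega

end Tower

namespace SimpleGraph.completeMultipartiteGraph

variable {ι : Type*} {V : ι → Type*}

lemma adj_iff {u v : Σ i, V i} : (completeMultipartiteGraph V).Adj u v ↔ u.1 ≠ v.1 := by
  simp

lemma dist_le_two (u v : Σ i, V i) : (completeMultipartiteGraph V).dist u v ≤ 2 := by
  by_cases h0 : (completeMultipartiteGraph V).dist u v = 0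
  · omega
  obtain ⟨huv, ⟨p⟩⟩ := dist_ne_zero_iff_ne_and_reachable.mp h0
  by_cases hadj : (completeMultipartiteGraph V).Adj u v
  · exact (dist_eq_one_iff_adj.mpr hadj).trans_le one_le_two
  have hu : (completeMultipartiteGraph V).Adj u p.snd := p.adj_snd (Walk.not_nil_of_ne huv)
  have hv : (completeMultipartiteGraph V).Adj p.snd v := by
    rw [adj_iff, not_not] at hadj
    rw [adj_iff] at hu ⊢
    exact hadj ▸ hu.symm
  exact dist_le (.cons hu (.cons hv .nil))

end SimpleGraph.completeMultipartiteGraph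

section Potential

variable {ι : Type*} [DecidableEq ι] {V : ι → Type*}

def partWeight (i : ι) (v : Σ i, V i) (c : ℕ) : ℕ :=
  if v.1 = i then 2 * c - c % 2 else if c = 0 then 0 else 3

lemma partWeight_move_le (i : ι) {u v : Σ i, V i} {cu cv : ℕ} (hu : 1 ≤ cu)
    (hv : 1 ≤ cv) (hd : (completeMultipartiteGraph V).dist u v = cu) :
    partWeight i u 0 + partWeight i v (cu + cv) ≤ partWeight i u cu + partWeight i v cv := by
  have hcu : u.1 ≠ v.1 ∧ cu = 1 ∨ u.1 = v.1 ∧ cu = 2 := by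
    by_cases h : u.1 = v.1
    · have hne1 : cu ≠ 1 := fun h1 => by
        rw [h1, dist_eq_one_iff_adj, completeMultipartiteGraph.adj_iff] at hd
        exact hd h
      have := completeMultipartiteGraph.dist_le_two u v
      exact .inr ⟨h, by omega⟩
    · rw [dist_eq_one_iff_adj.mpr (completeMultipartiteGraph.adj_iff.mpr h)] at hd
      exact .inl ⟨h, by omega⟩
  unfold partWeight
  rcases hcu with ⟨hne, rfl⟩ | ⟨heq, rfl⟩ <;> split_ifs <;> first | omega | simp_all

end Potential

section PotentialSum

variable {ι : Type*} [Fintype ι] [DecidableEq ι] {V : ι → Type*} [∀ i, Fintype (V i)]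

lemma card_filter_fst_eq (i : ι) : #{v : Σ i, V i | v.1 = i} = Fintype.card (V i) := by
  rw [card_filter, Fintype.sum_sigma]
  simp [apply_ite Finset.card]

lemma sum_partWeight_le_of_reflTransGen [∀ i, DecidableEq (V i)] (i : ι)
    {C D : (Σ i, V i) → ℕ}
    (h : Relation.ReflTransGen (CupMove (completeMultipartiteGraph V)) C D) :
    ∑ v, partWeight i v (D v) ≤ ∑ v, partWeight i v (C v) := by
  induction h with
  | refl => rfl
  | tail _ hmove ih =>
    exact (hmove.sum_le _ fun _ _ hu hv hd => partWeight_move_le i hu hv hd).trans ih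

lemma sum_partWeight_one_add_two_mul_card (i : ι) :
    ∑ v : Σ i, V i, partWeight i v 1 + 2 * Fintype.card (V i) =
      3 * Fintype.card (Σ i, V i) := by
  have hv (v : Σ i, V i) : partWeight i v 1 + 2 * (if v.1 = i then 1 else 0) = 3 := by
    unfold partWeight
    split_ifs <;> simp_all
  rw [← card_filter_fst_eq i, card_filter, mul_sum, ← sum_add_distrib,
    sum_congr rfl fun v _ => hv v, sum_const, card_univ, smul_eq_mul, mul_comm]

lemma two_mul_card_le_of_isStackableAt [∀ i, DecidableEq (V i)] {r : Σ i, V i}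
    (h : IsStackableAt (completeMultipartiteGraph V) r) :
    2 * Fintype.card (V r.1) ≤ Fintype.card (Σ i, V i) + 1 := by
  have hle := sum_partWeight_le_of_reflTransGen r.1 h
  rw [Fintype.sum_eq_single r fun v hv => by simp [partWeight, hv]] at hle
  have := sum_partWeight_one_add_two_mul_card (V := V) r.1
  simp only [if_pos, sum_const, card_univ, smul_eq_mul, mul_one] at hle
  rw [partWeight, if_pos rfl] at hle
  omega

end PotentialSum

section Stackability

variable {ι : Type*} [Fintype ι] [DecidableEq ι] {V : ι → Type*} [∀ i, Fintype (V i)]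
  [∀ i, DecidableEq (V i)]

lemma isStackableAt_of_two_mul_card_le {r : Σ i, V i}
    (h : 2 * Fintype.card (V r.1) ≤ Fintype.card (Σ i, V i) + 1) :
    IsStackableAt (completeMultipartiteGraph V) r := by
  set I : Finset (Σ i, V i) := {v | v.1 = r.1 ∧ v ≠ r}
  set O : Finset (Σ i, V i) := {v | v.1 ≠ r.1}
  have hI : #I + 1 = Fintype.card (V r.1) := by
    have hIpart : I = ({v | v.1 = r.1} : Finset (Σ i, V i)).erase r := by
      ext v
      simp [I, and_comm]
    rw [hIpart, card_erase_add_one (by simp), card_filter_fst_eq]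
  have hO : Fintype.card (V r.1) + #O = Fintype.card (Σ i, V i) := by
    rw [← card_filter_fst_eq r.1, card_filter_add_card_filter_not, card_univ]
  have hunion : tower r 1 (I ∪ O) = fun _ => 1 := by
    funext v
    by_cases hv : v = r <;> simp [tower, I, O, hv, em]
  have hstack := reflTransGen_tower_of_card_le (G := completeMultipartiteGraph V) (r := r)
    (I := I) (O := O) (by simp +contextual [I]) (by simp +contextual [I, O]) (by simp [O])
    (by omega) le_rfl
  rw [hunion] at hstack
  exact IsStackableConf.of_reflTransGen hstack fun v hv => by simp [tower, hv]

theorem isStackableAt_completeMultipartiteGraph_iff (r : Σ i, V i) :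
    IsStackableAt (completeMultipartiteGraph V) r ↔
      2 * Fintype.card (V r.1) ≤ Fintype.card (Σ i, V i) + 1 :=
  ⟨two_mul_card_le_of_isStackableAt, isStackableAt_of_two_mul_card_le⟩

theorem isStackable_completeMultipartiteGraph_iff :
    IsStackable (completeMultipartiteGraph V) ↔
      ∀ i, 2 * Fintype.card (V i) ≤ Fintype.card (Σ i, V i) + 1 := by
  refine ⟨fun h i => ?_, fun h r => (isStackableAt_completeMultipartiteGraph_iff r).mpr (h r.1)⟩
  cases isEmpty_or_nonempty (V i) with
  | inl hi => simp
  | inr hi =>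
    obtain ⟨x⟩ := hi
    exact (isStackableAt_completeMultipartiteGraph_iff ⟨i, x⟩).mp (h _)

end Stackability

theorem completeMultipartite_stackable_general (t : ℕ) (a : Fin t → ℕ) :
    (∀ r : Σ i : Fin t, Fin (a i),
        IsStackableAt (SimpleGraph.completeMultipartiteGraph (fun i => Fin (a i))) r ↔
          2 * a r.1 ≤ (∑ i, a i) + 1) ∧
    (IsStackable (SimpleGraph.completeMultipartiteGraph (fun i => Fin (a i))) ↔
      ∀ i : Fin t, 2 * a i ≤ (∑ i, a i) + 1) := by
  have hn : Fintype.card (Σ i : Fin t, Fin (a i)) = ∑ i, a i := by simp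
  refine ⟨fun r => ?_, ?_⟩
  · simpa [hn] using isStackableAt_completeMultipartiteGraph_iff r
  · simpa [hn] using isStackable_completeMultipartiteGraph_iff (V := fun i => Fin (a i))

theorem completeMultipartite_stackable (t : ℕ) (ht : 2 ≤ t) (a : Fin t → ℕ)
    (ha : ∀ i, 1 ≤ a i) :
    (∀ r : Σ i : Fin t, Fin (a i),
        IsStackableAt (SimpleGraph.completeMultipartiteGraph (fun i => Fin (a i))) r ↔
          2 * a r.1 ≤ (∑ i, a i) + 1) ∧
    (IsStackable (SimpleGraph.completeMultipartiteGraph (fun i => Fin (a i))) ↔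
      ∀ i : Fin t, 2 * a i ≤ (∑ i, a i) + 1) :=
  completeMultipartite_stackable_general t a
end

section
/- Let G be a finite connected simple graph and r a vertex of eccentricity 2 (max over vertices v of dist_G(r,v) equals 2). If G has a Hamiltonian path (a path visiting every vertex of G exactly once), then G is r-stackable. -/
/-!
Split the Hamiltonian path at `r` into two arms, each ending at a neighbour of `r`, and sweep
each arm from its far end towards `r`, keeping one cup on every vertex not yet swept. A vertex
adjacent to `r` sends its single cup to `r`. A vertex at distance `2` from `r` is not the last
one of its arm, so it first receives the cup of its successor on the path (distance `1`) and then
sends the resulting pile of two cups to `r` (distance `2`).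
-/

open Relation

namespace CupStacking

variable {V : Type*} [DecidableEq V]

def stackOnto (C : V → ℕ) (u v : V) : V → ℕ :=
  fun w => if w = u then 0 else if w = v then C u + C v else C w

/-- `r` gains one cup per entry of `s`, so this is the result of moving all cups of `s` onto `r`
only when `s` is duplicate-free, avoids `r` and carries one cup on each vertex. -/
def gatherAt (C : V → ℕ) (r : V) (s : List V) : V → ℕ :=
  fun w => if w = r then C r + s.length else if w ∈ s then 0 else C w

@[simp]
lemma gatherAt_self (C : V → ℕ) (r : V) (s : List V) : gatherAt C r s r = C r + s.length := by
  simp [gatherAt]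

lemma gatherAt_of_ne_of_notMem {C : V → ℕ} {r w : V} {s : List V} (hw : w ≠ r)
    (hs : w ∉ s) : gatherAt C r s w = C w := by
  simp [gatherAt, hw, hs]

@[simp]
lemma gatherAt_nil (C : V → ℕ) (r : V) : gatherAt C r [] = C := by
  funext w
  by_cases hw : w = r <;> simp [gatherAt, hw]

lemma gatherAt_gatherAt (C : V → ℕ) (r : V) (s t : List V) :
    gatherAt (gatherAt C r s) r t = gatherAt C r (s ++ t) := by
  funext w
  by_cases hw : w = r
  · subst hw
    simp only [gatherAt_self, List.length_append]
    omega
  · by_cases ht : w ∈ t <;> by_cases hs : w ∈ s <;> simp [gatherAt, hw, ht, hs]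

lemma stackOnto_eq_gatherAt {C : V → ℕ} {u r : V} (hur : u ≠ r) (hu : C u = 1) :
    stackOnto C u r = gatherAt C r [u] := by
  funext w
  by_cases hw : w = r
  · subst hw
    simp [stackOnto, Ne.symm hur, hu, add_comm]
  · by_cases hwu : w = u
    · simp [stackOnto, gatherAt, hwu, hur]
    · simp [stackOnto, gatherAt, hw, hwu]

lemma stackOnto_stackOnto_eq_gatherAt {C : V → ℕ} {u v r : V} (huv : u ≠ v) (hur : u ≠ r)
    (hvr : v ≠ r) (hu : C u = 1) (hv : C v = 1) :
    stackOnto (stackOnto C v u) u r = gatherAt C r [u, v] := by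
  funext w
  by_cases hw : w = r
  · subst hw
    simp [stackOnto, Ne.symm hur, Ne.symm hvr, huv, hu, hv]
    omega
  · by_cases hwu : w = u <;> by_cases hwv : w = v <;>
      simp_all [stackOnto, gatherAt]

lemma gatherAt_eq_one_of_disjoint {C : V → ℕ} {r : V} {s t : List V}
    (hone : ∀ x ∈ t, C x = 1) (hrt : r ∉ t) (hst : s.Disjoint t) :
    ∀ x ∈ t, gatherAt C r s x = 1 := by
  intro x hx
  rw [gatherAt_of_ne_of_notMem (by rintro rfl; exact hrt hx) (fun hs => hst hs hx)]
  exact hone x hx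

variable (G : SimpleGraph V)

lemma cupMove_stackOnto {C : V → ℕ} {u v : V} (huv : u ≠ v) (hu : 1 ≤ C u) (hv : 1 ≤ C v)
    (hdist : G.dist u v = C u) : CupMove G C (stackOnto C u v) :=
  ⟨u, v, huv, hu, hv, hdist, fun _ => rfl⟩

lemma cupMove_gatherAt_singleton {C : V → ℕ} {u r : V} (hadj : G.Adj u r) (hu : C u = 1)
    (hr : 1 ≤ C r) : CupMove G C (gatherAt C r [u]) := by
  rw [← stackOnto_eq_gatherAt hadj.ne hu]
  exact cupMove_stackOnto G hadj.ne (by omega) hr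
    (by rw [hu, SimpleGraph.dist_eq_one_iff_adj.mpr hadj])

lemma reflTransGen_cupMove_gatherAt_pair {C : V → ℕ} {u v r : V} (hadj : G.Adj u v)
    (hur : u ≠ r) (hvr : v ≠ r) (hdist : G.dist u r = 2) (hu : C u = 1) (hv : C v = 1)
    (hr : 1 ≤ C r) : ReflTransGen (CupMove G) C (gatherAt C r [u, v]) := by
  rw [← stackOnto_stackOnto_eq_gatherAt hadj.ne hur hvr hu hv]
  have hpile : stackOnto C v u u = 2 := by simp [stackOnto, hadj.ne, hu, hv]
  have hpile_r : stackOnto C v u r = C r := by simp [stackOnto, hur.symm, hvr.symm]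
  refine .tail (.single (cupMove_stackOnto G hadj.ne.symm (by omega) (by omega) ?_)) ?_
  · rw [hv, SimpleGraph.dist_comm, SimpleGraph.dist_eq_one_iff_adj.mpr hadj]
  · exact cupMove_stackOnto G hur (by omega) (by omega) (by rw [hpile, hdist])

theorem reflTransGen_cupMove_gatherAt (hG : G.Connected) {r : V} :
    ∀ {s : List V} {C : V → ℕ}, s.IsChain G.Adj → s.Nodup → r ∉ s →
      (∀ x ∈ s, G.dist x r ≤ 2) → (∀ x ∈ s.getLast?, G.Adj x r) →
      (∀ x ∈ s, C x = 1) → 1 ≤ C r → ReflTransGen (CupMove G) C (gatherAt C r s)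
  | [], C, _, _, _, _, _, _, _ => by simpa using .refl
  | [u], C, _, _, _, _, hlast, hone, hr =>
    .single (cupMove_gatherAt_singleton G (hlast u rfl) (hone u (by simp)) hr)
  | u :: v :: t, C, hchain, hnodup, hrs, hdist, hlast, hone, hr => by
    have hur : u ≠ r := by rintro rfl; exact hrs List.mem_cons_self
    have hrvt : r ∉ v :: t := fun h => hrs (.tail _ h)
    have hvr : v ≠ r := by rintro rfl; exact hrvt List.mem_cons_self
    have hrt : r ∉ t := fun h => hrvt (.tail _ h)
    by_cases hadj : G.Adj u r
    · refine .head (cupMove_gatherAt_singleton G hadj (hone u List.mem_cons_self) hr) ?_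
      show ReflTransGen _ _ (gatherAt C r ([u] ++ v :: t))
      rw [← gatherAt_gatherAt]
      exact reflTransGen_cupMove_gatherAt hG hchain.tail hnodup.of_cons hrvt
        (fun x hx => hdist x (.tail _ hx)) (fun x hx => hlast x (List.mem_getLast?_cons hx))
        (gatherAt_eq_one_of_disjoint (fun x hx => hone x (.tail _ hx)) hrvt
          (List.disjoint_of_nodup_append (l₁ := [u]) hnodup))
        (by rw [gatherAt_self]; omega)
    · have hdist_u : G.dist u r = 2 := by
        have := hG.pos_dist_of_ne hur
        have := hdist u List.mem_cons_self
        have := mt SimpleGraph.dist_eq_one_iff_adj.mp hadj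
        omega
      refine (reflTransGen_cupMove_gatherAt_pair G (List.isChain_cons_cons.mp hchain).1
        hur hvr hdist_u (hone u List.mem_cons_self) (hone v (.tail _ List.mem_cons_self))
        hr).trans ?_
      show ReflTransGen _ _ (gatherAt C r ([u, v] ++ t))
      rw [← gatherAt_gatherAt]
      exact reflTransGen_cupMove_gatherAt hG hchain.tail.tail hnodup.of_cons.of_cons hrt
        (fun x hx => hdist x (.tail _ (.tail _ hx)))
        (fun x hx => hlast x (List.mem_getLast?_cons (List.mem_getLast?_cons hx)))
        (gatherAt_eq_one_of_disjoint (fun x hx => hone x (.tail _ (.tail _ hx))) hrt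
          (List.disjoint_of_nodup_append (l₁ := [u, v]) hnodup))
        (by rw [gatherAt_self]; omega)

theorem reflTransGen_cupMove_gatherAt_of_append_cons (hG : G.Connected) {L R : List V} {r : V}
    {C : V → ℕ} (hchain : (L ++ r :: R).IsChain G.Adj) (hnodup : (L ++ r :: R).Nodup)
    (hdist : ∀ x ∈ L, G.dist x r ≤ 2) (hone : ∀ x ∈ L, C x = 1) (hr : 1 ≤ C r) :
    ReflTransGen (CupMove G) C (gatherAt C r L) := by
  obtain ⟨hchain_L, -, hlast⟩ := List.isChain_append.mp hchain
  have hnodup_L : L.Nodup := hnodup.sublist (List.sublist_append_left L _)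
  have hrL : r ∉ L := fun hr => List.disjoint_of_nodup_append hnodup hr List.mem_cons_self
  exact reflTransGen_cupMove_gatherAt G hG hchain_L hnodup_L hrL hdist
    (fun x hx => hlast x hx r rfl) hone hr

theorem reflTransGen_cupMove_gatherAt_arms (hG : G.Connected) {L R : List V} {r : V}
    {C : V → ℕ} (hchain : (L ++ r :: R).IsChain G.Adj) (hnodup : (L ++ r :: R).Nodup)
    (hdist : ∀ x ∈ L ++ R, G.dist x r ≤ 2) (hone : ∀ x ∈ L ++ R, C x = 1)
    (hr : 1 ≤ C r) :
    ReflTransGen (CupMove G) C (gatherAt C r (L ++ R.reverse)) := by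
  have hchain_rev : (R.reverse ++ r :: L.reverse).IsChain G.Adj := by
    simpa using List.isChain_reverse.mpr (hchain.imp fun _ _ h => h.symm)
  have hnodup_rev : (R.reverse ++ r :: L.reverse).Nodup := by
    simpa using List.nodup_reverse.mpr hnodup
  have hrR : r ∉ R.reverse := by
    simpa using (List.nodup_cons.mp (hnodup.sublist (List.sublist_append_right _ _))).1
  have hone_R : ∀ x ∈ R.reverse, gatherAt C r L x = 1 :=
    gatherAt_eq_one_of_disjoint
      (fun x hx => hone x (List.mem_append_right L (List.mem_reverse.mp hx))) hrR
      (fun x hxL hxR => List.disjoint_of_nodup_append hnodup hxL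
        (.tail _ (List.mem_reverse.mp hxR)))
  rw [← gatherAt_gatherAt]
  refine (reflTransGen_cupMove_gatherAt_of_append_cons G hG hchain hnodup
    (fun x hx => hdist x (List.mem_append_left R hx))
    (fun x hx => hone x (List.mem_append_left R hx)) hr).trans ?_
  exact reflTransGen_cupMove_gatherAt_of_append_cons G hG hchain_rev hnodup_rev
    (fun x hx => hdist x (List.mem_append_right L (List.mem_reverse.mp hx))) hone_R
    (by rw [gatherAt_self]; omega)

end CupStacking

open CupStacking in
theorem hamiltonianPath_ecc_two_stackable_general {V : Type*} [Fintype V] [DecidableEq V]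
    (G : SimpleGraph V) (hG : G.Connected) (r : V)
    (hecc_le : ∀ v : V, G.dist r v ≤ 2)
    (hham : ∃ (u v : V) (p : G.Walk u v), p.IsHamiltonian) :
    IsStackableAt G r := by
  obtain ⟨u, v, p, hp⟩ := hham
  obtain ⟨L, R, hsplit⟩ := List.append_of_mem (hp.mem_support r)
  have hsweep := reflTransGen_cupMove_gatherAt_arms G hG (hsplit ▸ p.isChain_adj_support)
    (hsplit ▸ hp.isPath.support_nodup) (fun x _ => G.dist_comm ▸ hecc_le x)
    (C := fun _ => 1) (fun _ _ => rfl) le_rfl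
  have hcard : ∑ _ : V, 1 = 1 + (L ++ R.reverse).length := by
    simp only [Finset.sum_const, Finset.card_univ, smul_eq_mul, mul_one, ← hp.length_support,
      hsplit, List.length_append, List.length_cons, List.length_reverse]
    omega
  unfold IsStackableAt IsStackableConf
  convert hsweep using 1
  funext w
  by_cases hw : w = r
  · simp [hw, hcard]
  · have hw_mem : w ∈ L ++ R.reverse := by
      have := hsplit ▸ hp.mem_support w
      simp_all
    simp [gatherAt, hw, hw_mem]

theorem hamiltonianPath_ecc_two_stackable {V : Type*} [Fintype V] [DecidableEq V]
    (G : SimpleGraph V) (hG : G.Connected) (r : V)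
    (hecc_le : ∀ v : V, G.dist r v ≤ 2) (hecc_eq : ∃ v : V, G.dist r v = 2)
    (hham : ∃ (u v : V) (p : G.Walk u v), p.IsHamiltonian) :
    IsStackableAt G r :=
  hamiltonianPath_ecc_two_stackable_general G hG r hecc_le hham
end
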